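/- arXiv:1310.2516 — 11 statements merged into one kernel-verified Lean document; each statement's English description precedes it below -/
import Mathlib

section
/- Let x̂_0 < x̂_1 < … < x̂_n and x_0 < x_1 < … < x_n be real numbers, and define the piecewise linear map χ : [x̂_0, x̂_n] → [x_0, x_n] by χ(x̂_0) := x_0 and χ(x̂) := x_k + (x̂ − x̂_k)·(x_{k+1} − x_k)/(x̂_{k+1} − x̂_k) for x̂_k < x̂ ≤ x̂_{k+1}. Then for every x̂ ∈ [x̂_0, x̂_n] one has |χ(x̂) − x̂| ≤ max_{0 ≤ k ≤ n} |x̂_k − x_k|. -/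
/-- The sup norm `max_k |y_k|` of a vector `y ∈ ℝ^{n+1}`. -/
noncomputable def supNorm {n : ℕ} (y : Fin (n + 1) → ℝ) : ℝ :=
  Finset.univ.sup' Finset.univ_nonempty fun k => |y k|

/-- Let `x̂_0 < … < x̂_n` and `x_0 < … < x_n` be real numbers and let `χ` be the
piecewise linear map with `χ(x̂_0) = x_0` and
`χ(t) = x_k + (t − x̂_k)·(x_{k+1} − x_k)/(x̂_{k+1} − x̂_k)` for `x̂_k < t ≤ x̂_{k+1}`.
Then for every `t ∈ [x̂_0, x̂_n]` one has `|χ(t) − t| ≤ max_k |x̂_k − x_k|`. -/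
theorem piecewise_linear_close_to_id
    (n : ℕ) (x xh : Fin (n + 1) → ℝ)
    (hx : StrictMono x) (hxh : StrictMono xh)
    (χ : ℝ → ℝ)
    (hχ0 : χ (xh 0) = x 0)
    (hχ : ∀ k : Fin n, ∀ t : ℝ, xh k.castSucc < t → t ≤ xh k.succ →
      χ t = x k.castSucc +
        (t - xh k.castSucc) * (x k.succ - x k.castSucc) / (xh k.succ - xh k.castSucc)) :
    ∀ t ∈ Set.Icc (xh 0) (xh (Fin.last n)),
      |χ t - t| ≤ supNorm (fun k => xh k - x k) := by
  intro t ht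
  obtain ⟨h0, hl⟩ := ht
  set M := supNorm (fun k => xh k - x k) with hM
  have hMk : ∀ k : Fin (n + 1), |xh k - x k| ≤ M := fun k =>
    Finset.le_sup' (fun k => |xh k - x k|) (Finset.mem_univ k)
  have hM0 : 0 ≤ M := le_trans (abs_nonneg _) (hMk 0)
  rcases eq_or_lt_of_le h0 with heq | hlt
  · rw [← heq, hχ0, abs_sub_comm]
    exact hMk 0
  · -- find k with xh k.castSucc < t ≤ xh k.succ
    classical
    set S : Finset (Fin (n + 1)) := Finset.univ.filter (fun i => xh i < t) with hS
    have hS0 : (0 : Fin (n + 1)) ∈ S := by simp [hS, hlt]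
    have hSne : S.Nonempty := ⟨0, hS0⟩
    set k := S.max' hSne with hk
    have hkS : k ∈ S := S.max'_mem hSne
    have hkt : xh k < t := by simpa [hS] using hkS
    have hkn : (k : ℕ) < n := by
      rcases lt_or_eq_of_le (Nat.lt_succ_iff.mp k.isLt) with h | h
      · exact h
      · exfalso
        have : k = Fin.last n := Fin.ext h
        rw [this] at hkt
        exact absurd hl (not_le.mpr hkt)
    set j : Fin n := ⟨(k : ℕ), hkn⟩ with hj
    have hjc : j.castSucc = k := rfl
    have hjs : t ≤ xh j.succ := by
      by_contra h
      push_neg at h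
      have hmem : j.succ ∈ S := by simp [hS, h]
      have := S.le_max' _ hmem
      rw [← hk] at this
      have : (j.succ : ℕ) ≤ (k : ℕ) := this
      simp [Fin.val_succ, hj] at this
    have hat : xh j.castSucc < t := by rw [hjc]; exact hkt
    set a := xh j.castSucc
    set b := xh j.succ
    set c := x j.castSucc
    set d := x j.succ
    have hab : a < b := hxh (Fin.castSucc_lt_succ : j.castSucc < j.succ)
    have hba : (0 : ℝ) < b - a := sub_pos.mpr hab
    set L : ℝ := (t - a) / (b - a) with hL
    have hL0 : 0 ≤ L := div_nonneg (le_of_lt (sub_pos.mpr hat)) hba.le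
    have hL1 : L ≤ 1 := (div_le_one hba).mpr (by linarith)
    have key : χ t - t = (1 - L) * (c - a) + L * (d - b) := by
      rw [hχ j t hat hjs, hL]
      change c + (t - a) * (d - c) / (b - a) - t = (1 - (t - a) / (b - a)) * (c - a) + (t - a) / (b - a) * (d - b)
      have hne : b - a ≠ 0 := hba.ne'
      field_simp
      ring
    have hca : |c - a| ≤ M := by rw [abs_sub_comm]; exact hMk j.castSucc
    have hdb : |d - b| ≤ M := by rw [abs_sub_comm]; exact hMk j.succ
    calc |χ t - t| = |(1 - L) * (c - a) + L * (d - b)| := by rw [key]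
      _ ≤ |(1 - L) * (c - a)| + |L * (d - b)| := abs_add_le _ _
      _ = (1 - L) * |c - a| + L * |d - b| := by
          rw [abs_mul, abs_mul, abs_of_nonneg (by linarith : (0:ℝ) ≤ 1 - L),
            abs_of_nonneg hL0]
      _ ≤ (1 - L) * M + L * M := by
          gcongr <;> linarith
      _ = M := by ring
end

section
/- Let x̂_0 < x̂_1 < … < x̂_n and x_0 < x_1 < … < x_n be real numbers, and define the piecewise linear map χ : [x̂_0, x̂_n] → [x_0, x_n] by χ(x̂_0) := x_0 and χ(x̂) := x_k + (x̂ − x̂_k)·(x_{k+1} − x_k)/(x̂_{k+1} − x̂_k) for x̂_k < x̂ ≤ x̂_{k+1}. Then for every j with 0 ≤ j ≤ n, every k with 0 ≤ k < n, and every x̂ with x̂_k < x̂ < x̂_{k+1}, one has |(χ(x̂) − x_j)/(x̂ − x̂_j) − 1| ≤ max{|δ_{jk}|, |δ_{j(k+1)}|}. -/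
/-- Let `x̂_0 < … < x̂_n` and `x_0 < … < x_n` be real numbers and let `χ` be the
piecewise linear map with `χ(x̂_0) = x_0` and
`χ(t) = x_k + (t − x̂_k)·(x_{k+1} − x_k)/(x̂_{k+1} − x̂_k)` for `x̂_k < t ≤ x̂_{k+1}`.
With `δ_{kk} := 0` and `δ_{jk} := (x_j − x_k)/(x̂_j − x̂_k) − 1` for `j ≠ k`,
for every `j`, every `k < n` and every `t` with `x̂_k < t < x̂_{k+1}` one has
`|(χ(t) − x_j)/(t − x̂_j) − 1| ≤ max {|δ_{jk}|, |δ_{j(k+1)}|}`. -/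
theorem piecewise_linear_relative_error_bound
    (n : ℕ) (x xh : Fin (n + 1) → ℝ)
    (hx : StrictMono x) (hxh : StrictMono xh)
    (χ : ℝ → ℝ)
    (hχ0 : χ (xh 0) = x 0)
    (hχ : ∀ k : Fin n, ∀ t : ℝ, xh k.castSucc < t → t ≤ xh k.succ →
      χ t = x k.castSucc +
        (t - xh k.castSucc) * (x k.succ - x k.castSucc) / (xh k.succ - xh k.castSucc))
    (δ : Fin (n + 1) → Fin (n + 1) → ℝ)
    (hδ : ∀ j k, δ j k = if j = k then 0 else (x j - x k) / (xh j - xh k) - 1) :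
    ∀ j : Fin (n + 1), ∀ k : Fin n, ∀ t : ℝ,
      xh k.castSucc < t → t < xh k.succ →
      |(χ t - x j) / (t - xh j) - 1| ≤ max |δ j k.castSucc| |δ j k.succ| := by
  intro j k t ht1 ht2
  have hab : xh k.castSucc < xh k.succ := hxh (Fin.castSucc_lt_succ : k.castSucc < k.succ)
  have hχt := hχ k t ht1 ht2.le
  set a := xh k.castSucc with ha
  set b := xh k.succ with hb
  set A := x k.castSucc with hA
  set B := x k.succ with hB
  have hba : b - a ≠ 0 := sub_ne_zero.2 hab.ne'
  set l := (t - a) / (b - a) with hl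
  have hl0 : 0 < l := div_pos (by linarith) (by linarith)
  have hl1 : l < 1 := (div_lt_one (by linarith)).2 (by linarith)
  set u := a - xh j with hu
  set v := b - xh j with hv
  set d1 := δ j k.castSucc with hd1
  set d2 := δ j k.succ with hd2
  have h1 : A - x j = u + d1 * u := by
    rcases eq_or_ne j k.castSucc with h | h
    · subst h
      simp [hd1, hδ, hu, hA, ha]
    · have hne : xh j - a ≠ 0 := sub_ne_zero.2 fun hh => h (hxh.injective hh)
      rw [hd1, hδ, if_neg h]
      rw [hu]
      rw [← ha, ← hA]
      field_simp
      ring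
  have h2 : B - x j = v + d2 * v := by
    rcases eq_or_ne j k.succ with h | h
    · subst h
      simp [hd2, hδ, hv, hB, hb]
    · have hne : xh j - b ≠ 0 := sub_ne_zero.2 fun hh => h (hxh.injective hh)
      rw [hd2, hδ, if_neg h]
      rw [hv]
      rw [← hb, ← hB]
      field_simp
      ring
  have hden : t - xh j = l * v + (1 - l) * u := by
    rw [hl, hu, hv]
    field_simp
    ring
  have hnum : χ t - x j = (t - xh j) + (l * d2 * v + (1 - l) * d1 * u) := by
    have e1 : A = x j + (u + d1 * u) := by linarith
    have e2 : B = x j + (v + d2 * v) := by linarith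
    rw [hχt, hden, e1, e2, hl]
    field_simp
    ring
  obtain ⟨hdne, habs⟩ : (t - xh j ≠ 0) ∧ (l * |v| + (1 - l) * |u| = |t - xh j|) := by
    rcases le_or_gt j k.castSucc with hj | hj
    · have hu0 : 0 ≤ u := sub_nonneg.2 (hxh.monotone hj)
      have hv0 : 0 < v := sub_pos.2 (lt_of_le_of_lt (hxh.monotone hj) hab)
      have hpos : 0 < l * v + (1 - l) * u := by nlinarith
      refine ⟨by rw [hden]; exact hpos.ne', ?_⟩
      rw [hden, abs_of_pos hpos, abs_of_pos hv0, abs_of_nonneg hu0]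
    · have hj' : k.succ ≤ j := Fin.castSucc_lt_iff_succ_le.mp hj
      have hv0 : v ≤ 0 := sub_nonpos.2 (hxh.monotone hj')
      have hu0 : u < 0 := sub_neg.2 (lt_of_lt_of_le hab (hxh.monotone hj'))
      have hneg : l * v + (1 - l) * u < 0 := by nlinarith
      refine ⟨by rw [hden]; exact hneg.ne, ?_⟩
      rw [hden, abs_of_neg hneg, abs_of_nonpos hv0, abs_of_neg hu0]
      ring
  have hM1 : |d1| ≤ max |d1| |d2| := le_max_left _ _
  have hM2 : |d2| ≤ max |d1| |d2| := le_max_right _ _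
  have key : |l * d2 * v + (1 - l) * d1 * u| ≤ max |d1| |d2| * |t - xh j| := by
    rw [← habs]
    calc |l * d2 * v + (1 - l) * d1 * u|
        ≤ |l * d2 * v| + |(1 - l) * d1 * u| := abs_add_le _ _
      _ = l * |d2| * |v| + (1 - l) * |d1| * |u| := by
          rw [abs_mul, abs_mul, abs_mul, abs_mul, abs_of_pos hl0,
            abs_of_pos (by linarith : (0:ℝ) < 1 - l)]
      _ ≤ l * (max |d1| |d2|) * |v| + (1 - l) * (max |d1| |d2|) * |u| := by
          gcongr <;> linarith
      _ = max |d1| |d2| * (l * |v| + (1 - l) * |u|) := by ring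
  have hrw : (χ t - x j) / (t - xh j) - 1 =
      (l * d2 * v + (1 - l) * d1 * u) / (t - xh j) := by
    rw [hnum, add_div, div_self hdne]
    ring
  rw [hrw, abs_div, div_le_iff₀ (abs_pos.2 hdne)]
  exact key
end

section
/- Assume the nodes x_0 < … < x_n, the endpoints x⁻ ≤ x⁺, the perturbed nodes x̂_0, …, x̂_n and perturbed endpoints x̂⁻, x̂⁺ satisfy the interlacing conditions, and let k⁻ be the smallest k with x_k > x⁻ and k⁺ the largest k with x_k < x⁺, with k⁺ ≥ k⁻. If δ < 1, then the x̂_k are strictly increasing and there exists a strictly increasing bijection χ : [x̂⁻, x̂⁺] → [x⁻, x⁺] such that: χ(x̂⁻) = x⁻, χ(x̂_k) = x_k for all k, χ(x̂⁺) = x⁺; |χ(x̂) − x̂| ≤ max{ max_k |x_k − x̂_k|, |x⁻ − x̂⁻|, |x⁺ − x̂⁺| } for all x̂ ∈ [x̂⁻, x̂⁺]; and for every j with 0 ≤ j ≤ n: (i) if x̂⁻ < x̂ < x̂_{k⁻} then |(χ(x̂) − x_j)/(x̂ − x̂_j) − 1| ≤ max{|δ⁻_j|, |δ_{jk⁻}|};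 (ii) if k⁻ ≤ k < k⁺ and x̂_k < x̂ < x̂_{k+1} then |(χ(x̂) − x_j)/(x̂ − x̂_j) − 1| ≤ max{|δ_{jk}|, |δ_{j(k+1)}|}; (iii) if x̂_{k⁺} < x̂ < x̂⁺ then |(χ(x̂) − x_j)/(x̂ − x̂_j) − 1| ≤ max{|δ_{jk⁺}|, |δ⁺_j|}. -/
open Finset Set


open Finset Set

/-- Mediant bound. -/
lemma med_bound (p q A B : ℝ) (hp : 0 ≤ p) (hq : 0 ≤ q) (hpq : 0 < p + q) :
    |(p * A + q * B) / (p + q)| ≤ max |A| |B| := by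
  rw [abs_div, abs_of_pos hpq, div_le_iff₀ hpq]
  have h1 : |p * A + q * B| ≤ p * |A| + q * |B| := by
    calc |p * A + q * B| ≤ |p * A| + |q * B| := abs_add_le _ _
      _ = p * |A| + q * |B| := by rw [abs_mul, abs_mul, abs_of_nonneg hp, abs_of_nonneg hq]
  have h2 : p * |A| + q * |B| ≤ max |A| |B| * (p + q) := by
    have := le_max_left |A| |B|; have := le_max_right |A| |B|
    nlinarith
  linarith

/-- Distance of a linear interpolant to the identity. -/
lemma lin_dist (a b c e t : ℝ) (hab : a < b) (ht1 : a ≤ t) (ht2 : t ≤ b) :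
    |c + (e - c) / (b - a) * (t - a) - t| ≤ max |c - a| |e - b| := by
  have hba : (0:ℝ) < b - a := by linarith
  set lam := (t - a) / (b - a) with hlam
  have hl0 : 0 ≤ lam := div_nonneg (by linarith) hba.le
  have hl1 : lam ≤ 1 := by rw [hlam, div_le_one hba]; linarith
  have key : c + (e - c) / (b - a) * (t - a) - t = (1 - lam) * (c - a) + lam * (e - b) := by
    rw [hlam]; field_simp; ring
  rw [key]
  have := le_max_left |c - a| |e - b|; have := le_max_right |c - a| |e - b|
  have h1 : |(1 - lam) * (c - a) + lam * (e - b)| ≤ (1 - lam) * |c - a| + lam * |e - b| := by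
    calc _ ≤ |(1 - lam) * (c - a)| + |lam * (e - b)| := abs_add_le _ _
      _ = (1 - lam) * |c - a| + lam * |e - b| := by
          rw [abs_mul, abs_mul, abs_of_nonneg hl0, abs_of_nonneg (by linarith : (0:ℝ) ≤ 1 - lam)]
  have h0 : 0 ≤ |c - a| := abs_nonneg _
  have h0' : 0 ≤ |e - b| := abs_nonneg _
  nlinarith

/-- Relative-error bound for a linear interpolant. -/
lemma lin_ratio (a b A B xj yj t r1 r2 : ℝ)
    (hab : a < b)
    (h1 : A - xj = r1 * (a - yj)) (h2 : B - xj = r2 * (b - yj))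
    (hsgn : (0 ≤ a - yj ∧ 0 ≤ b - yj) ∨ (a - yj ≤ 0 ∧ b - yj ≤ 0))
    (ht1 : a < t) (ht2 : t < b) :
    |(A + (B - A) / (b - a) * (t - a) - xj) / (t - yj) - 1| ≤ max |r1 - 1| |r2 - 1| := by
  have hba : (0:ℝ) < b - a := by linarith
  set lam := (t - a) / (b - a) with hlam
  have hl0 : 0 < lam := div_pos (by linarith) hba
  have hl1 : lam < 1 := by rw [hlam, div_lt_one hba]; linarith
  have enum : A + (B - A) / (b - a) * (t - a) - xj
      = (1 - lam) * r1 * (a - yj) + lam * r2 * (b - yj) := by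
    have : A + (B - A) / (b - a) * (t - a) - xj = (A - xj) + lam * ((B - xj) - (A - xj)) := by
      rw [hlam]; field_simp; ring
    rw [this, h1, h2]; ring
  have eden : t - yj = (1 - lam) * (a - yj) + lam * (b - yj) := by
    rw [hlam]; field_simp; ring
  have ratio_shift : ∀ p q : ℝ, 0 < p + q →
      (p * r1 + q * r2) / (p + q) - 1 = (p * (r1 - 1) + q * (r2 - 1)) / (p + q) := by
    intro p q hpq
    field_simp
    ring
  rcases hsgn with ⟨hs1, hs2⟩ | ⟨hs1, hs2⟩
  · have hp0 : 0 ≤ (1 - lam) * (a - yj) := mul_nonneg (by linarith) hs1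
    have hq0 : 0 ≤ lam * (b - yj) := mul_nonneg hl0.le hs2
    have hpq : 0 < (1 - lam) * (a - yj) + lam * (b - yj) := by rw [← eden]; nlinarith
    have e1 : A + (B - A) / (b - a) * (t - a) - xj
        = (1 - lam) * (a - yj) * r1 + lam * (b - yj) * r2 := by rw [enum]; ring
    rw [e1, eden, ratio_shift _ _ hpq]
    exact med_bound _ _ _ _ hp0 hq0 hpq
  · have hp0 : 0 ≤ (1 - lam) * (yj - a) := mul_nonneg (by linarith) (by linarith)
    have hq0 : 0 ≤ lam * (yj - b) := mul_nonneg hl0.le (by linarith)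
    have e2 : t - yj = -((1 - lam) * (yj - a) + lam * (yj - b)) := by rw [eden]; ring
    have hpq : 0 < (1 - lam) * (yj - a) + lam * (yj - b) := by nlinarith
    have e1 : A + (B - A) / (b - a) * (t - a) - xj
        = -((1 - lam) * (yj - a) * r1 + lam * (yj - b) * r2) := by rw [enum]; ring
    rw [e1, e2, neg_div_neg_eq, ratio_shift _ _ hpq]
    exact med_bound _ _ _ _ hp0 hq0 hpq

open Finset Set

noncomputable def pl (u v : ℕ → ℝ) (M : ℕ) (t : ℝ) : ℝ :=
  v 0 + ∑ i ∈ Finset.range M,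
    (v (i + 1) - v i) / (u (i + 1) - u i) * (min t (u (i + 1)) - min t (u i))

section PL
variable {u v : ℕ → ℝ} {M : ℕ}
variable (hu : ∀ i < M, u i < u (i + 1)) (hv : ∀ i < M, v i < v (i + 1))

include hu in
lemma u_mono : ∀ i j, i ≤ j → j ≤ M → u i ≤ u j := by
  intro i j hij hjM
  induction j with
  | zero => simp_all
  | succ m ih =>
    rcases Nat.lt_or_ge i (m + 1) with h | h
    · exact le_trans (ih (Nat.lt_succ_iff.mp h) (by omega)) (hu m (by omega)).le
    · have : i = m + 1 := by omega
      simp [this]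

include hv in
lemma v_mono : ∀ i j, i ≤ j → j ≤ M → v i ≤ v j := by
  intro i j hij hjM
  induction j with
  | zero => simp_all
  | succ m ih =>
    rcases Nat.lt_or_ge i (m + 1) with h | h
    · exact le_trans (ih (Nat.lt_succ_iff.mp h) (by omega)) (hv m (by omega)).le
    · have : i = m + 1 := by omega
      simp [this]

include hu in
lemma pl_knot : ∀ j ≤ M, pl u v M (u j) = v j := by
  intro j hj
  unfold pl
  have key : ∀ i ∈ Finset.range M,
      (v (i + 1) - v i) / (u (i + 1) - u i) * (min (u j) (u (i + 1)) - min (u j) (u i))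
      = v (min j (i + 1)) - v (min j i) := by
    intro i hi
    rw [Finset.mem_range] at hi
    rcases Nat.lt_or_ge i j with h | h
    · have h1 : min (u j) (u (i + 1)) = u (i + 1) :=
        min_eq_right (u_mono hu (i + 1) j h (by omega))
      have h2 : min (u j) (u i) = u i :=
        min_eq_right (u_mono hu i j h.le (by omega))
      have h3 : min j (i + 1) = i + 1 := by omega
      have h4 : min j i = i := by omega
      rw [h1, h2, h3, h4, div_mul_eq_mul_div, mul_div_assoc,
        div_self (by have := hu i hi; linarith), mul_one]
    · have h1 : min (u j) (u (i + 1)) = u j :=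
        min_eq_left (u_mono hu j (i + 1) (by omega) (by omega))
      have h2 : min (u j) (u i) = u j := min_eq_left (u_mono hu j i h (by omega))
      have h3 : min j (i + 1) = j := by omega
      have h4 : min j i = j := by omega
      rw [h1, h2, h3, h4]
      ring
  rw [Finset.sum_congr rfl key, Finset.sum_range_sub (fun i => v (min j i)) M]
  simp [Nat.min_eq_left hj]

include hu in
lemma pl_seg : ∀ i < M, ∀ t, u i ≤ t → t ≤ u (i + 1) →
    pl u v M t = v i + (v (i + 1) - v i) / (u (i + 1) - u i) * (t - u i) := by
  intro i hi t ht1 ht2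
  unfold pl
  have key : ∀ k ∈ Finset.range M,
      (v (k + 1) - v k) / (u (k + 1) - u k) * (min t (u (k + 1)) - min t (u k))
      = (v (min i (k + 1)) - v (min i k))
        + (if k = i then (v (i + 1) - v i) / (u (i + 1) - u i) * (t - u i) else 0) := by
    intro k hk
    rw [Finset.mem_range] at hk
    rcases Nat.lt_trichotomy k i with h | h | h
    · have h1 : min t (u (k + 1)) = u (k + 1) :=
        min_eq_right (le_trans (u_mono hu (k + 1) i h (by omega)) ht1)
      have h2 : min t (u k) = u k :=
        min_eq_right (le_trans (u_mono hu k i h.le (by omega)) ht1)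
      have h3 : min i (k + 1) = k + 1 := by omega
      have h4 : min i k = k := by omega
      rw [h1, h2, h3, h4, if_neg (by omega), div_mul_eq_mul_div, mul_div_assoc,
        div_self (by have := hu k hk; linarith), mul_one, add_zero]
    · subst h
      have h1 : min t (u (k + 1)) = t := min_eq_left ht2
      have h2 : min t (u k) = u k := min_eq_right ht1
      rw [h1, h2, if_pos rfl]
      simp
    · have h1 : min t (u (k + 1)) = t :=
        min_eq_left (le_trans ht2 (u_mono hu (i + 1) (k + 1) (by omega) (by omega)))
      have h2 : min t (u k) = t :=
        min_eq_left (le_trans ht2 (u_mono hu (i + 1) k (by omega) (by omega)))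
      have h3 : min i (k + 1) = i := by omega
      have h4 : min i k = i := by omega
      rw [h1, h2, h3, h4, if_neg (by omega)]
      ring
  rw [Finset.sum_congr rfl key, Finset.sum_add_distrib,
    Finset.sum_range_sub (fun k => v (min i k)) M, Finset.sum_ite_eq' (Finset.range M) i]
  simp [Nat.min_eq_left hi.le, hi]
  ring

lemma min_inc_mono {b a : ℝ} (hba : b ≤ a) : Monotone fun t => min t a - min t b := by
  intro s t hst
  simp only
  rcases le_total s b with h1 | h1 <;> rcases le_total t b with h2 | h2 <;>
    rcases le_total s a with h3 | h3 <;> rcases le_total t a with h4 | h4 <;>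
    simp [min_eq_left, min_eq_right, h1, h2, h3, h4] <;> linarith

include hu hv in
lemma pl_monotone : Monotone (pl u v M) := by
  intro s t hst
  unfold pl
  apply add_le_add le_rfl
  apply Finset.sum_le_sum
  intro i hi
  rw [Finset.mem_range] at hi
  have hsl : 0 ≤ (v (i + 1) - v i) / (u (i + 1) - u i) :=
    div_nonneg (by have := hv i hi; linarith) (by have := hu i hi; linarith)
  exact mul_le_mul_of_nonneg_left (min_inc_mono (hu i hi).le hst) hsl

include hu hv in
lemma pl_strictMonoOn : StrictMonoOn (pl u v M) (Set.Icc (u 0) (u M)) := by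
  intro s hs t ht hst
  have hMpos : 0 < M := by
    by_contra h
    have : M = 0 := by omega
    subst this
    simp only [Set.mem_Icc] at hs ht
    exact absurd (le_antisymm hst.le (le_trans ht.2 hs.1)) hst.ne
  classical
  set k := Nat.findGreatest (fun i => u i ≤ s) (M - 1) with hk
  have hkle : k ≤ M - 1 := Nat.findGreatest_le _
  have hks : u k ≤ s := by
    have := Nat.findGreatest_spec (P := fun i => u i ≤ s) (Nat.zero_le (M - 1)) hs.1
    simpa [← hk] using this
  have hsk1 : s < u (k + 1) := by
    rcases Nat.lt_or_ge k (M - 1) with h | h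
    · by_contra hcon
      exact Nat.findGreatest_is_greatest (Nat.lt_succ_self k) (by omega) (not_lt.mp hcon)
    · have hkM : k + 1 = M := by omega
      calc s < t := hst
        _ ≤ u M := ht.2
        _ = u (k + 1) := by rw [hkM]
  have hsum : pl u v M t - pl u v M s = ∑ i ∈ Finset.range M,
      (v (i + 1) - v i) / (u (i + 1) - u i)
        * ((min t (u (i + 1)) - min t (u i)) - (min s (u (i + 1)) - min s (u i))) := by
    unfold pl
    rw [add_sub_add_left_eq_sub, ← Finset.sum_sub_distrib]
    apply Finset.sum_congr rfl
    intro i _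
    ring
  have hpos : 0 < pl u v M t - pl u v M s := by
    rw [hsum]
    apply Finset.sum_pos'
    · intro i hi
      rw [Finset.mem_range] at hi
      have hs0 : 0 ≤ (v (i + 1) - v i) / (u (i + 1) - u i) :=
        div_nonneg (by have := hv i hi; linarith) (by have := hu i hi; linarith)
      exact mul_nonneg hs0 (by have := min_inc_mono (hu i hi).le hst.le; simpa using sub_nonneg.mpr this)
    · refine ⟨k, Finset.mem_range.mpr (by omega), ?_⟩
      have hsl : 0 < (v (k + 1) - v k) / (u (k + 1) - u k) :=
        div_pos (by have := hv k (by omega); linarith) (by have := hu k (by omega); linarith)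
      apply mul_pos hsl
      have e1 : min t (u k) = u k := min_eq_right (le_trans hks hst.le)
      have e2 : min s (u k) = u k := min_eq_right hks
      have e3 : min s (u (k + 1)) = s := min_eq_left hsk1.le
      have e4 : s < min t (u (k + 1)) := lt_min hst hsk1
      rw [e1, e2, e3]
      linarith
  linarith

lemma pl_continuous : Continuous (pl u v M) := by
  apply Continuous.add continuous_const
  apply continuous_finset_sum
  intro i _
  exact Continuous.mul continuous_const
    ((continuous_id.min continuous_const).sub (continuous_id.min continuous_const))

end PL



/-- **Corollary 4.2 of the paper.**
Under the interlacing conditions between the nodes `x_k`, the endpoints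
`x⁻ ≤ x⁺` and the perturbed nodes `x̂_k`, endpoints `x̂⁻, x̂⁺`, with `k⁻` the
smallest index with `x_k > x⁻` and `k⁺` the largest with `x_k < x⁺`, `k⁺ ≥ k⁻`,
if the perturbation measure `δ < 1` then the `x̂_k` are strictly increasing and
there is a strictly increasing bijection `χ : [x̂⁻, x̂⁺] → [x⁻, x⁺]` with
`χ(x̂⁻) = x⁻`, `χ(x̂_k) = x_k`, `χ(x̂⁺) = x⁺`,
`|χ(x̂) − x̂| ≤ max{max_k |x_k − x̂_k|, |x⁻ − x̂⁻|, |x⁺ − x̂⁺|}`, and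
satisfying the three stated bounds on `|(χ(x̂) − x_j)/(x̂ − x̂_j) − 1|`. -/
theorem exists_increasing_bijection_chi
    (n : ℕ) (x xh : Fin (n + 1) → ℝ) (xm xp xhm xhp : ℝ)
    (hx : StrictMono x)
    -- interlacing conditions
    (hio : ∀ k, (xm < x k ∧ x k < xp) ↔ (xhm < xh k ∧ xh k < xhp))
    (him : ∀ k, x k = xm ↔ xh k = xhm)
    (hip : ∀ k, x k = xp ↔ xh k = xhp)
    -- k⁻ and k⁺
    (km kp : Fin (n + 1))
    (hkm1 : xm < x km) (hkm2 : ∀ k, xm < x k → km ≤ k)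
    (hkp1 : x kp < xp) (hkp2 : ∀ k, x k < xp → k ≤ kp)
    (hkmkp : km ≤ kp)
    -- the perturbation measures
    (δ : Fin (n + 1) → Fin (n + 1) → ℝ)
    (hδ : ∀ j k, δ j k = if j = k then 0 else (x j - x k) / (xh j - xh k) - 1)
    (δm δp : Fin (n + 1) → ℝ)
    (hδm : ∀ j, δm j = if xhm = xh j then 0 else (xm - x j) / (xhm - xh j) - 1)
    (hδp : ∀ j, δp j = if xhp = xh j then 0 else (xp - x j) / (xhp - xh j) - 1)
    (d : ℝ)
    (hd : d = Finset.univ.sup' Finset.univ_nonempty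
      (fun p : Fin (n + 1) × Fin (n + 1) =>
        max |δm p.1| (max |δ p.1 p.2| |δp p.1|)))
    (hd1 : d < 1) :
    (∀ k : Fin n, xh k.castSucc < xh k.succ) ∧
    ∃ χ : ℝ → ℝ,
      StrictMonoOn χ (Set.Icc xhm xhp) ∧
      Set.BijOn χ (Set.Icc xhm xhp) (Set.Icc xm xp) ∧
      χ xhm = xm ∧ (∀ k, χ (xh k) = x k) ∧ χ xhp = xp ∧
      (∀ t ∈ Set.Icc xhm xhp,
        |χ t - t| ≤ max (supNorm (fun k => x k - xh k)) (max |xm - xhm| |xp - xhp|)) ∧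
      (∀ j : Fin (n + 1), ∀ t : ℝ, xhm < t → t < xh km →
        |(χ t - x j) / (t - xh j) - 1| ≤ max |δm j| |δ j km|) ∧
      (∀ j : Fin (n + 1), ∀ k : Fin n, km ≤ k.castSucc → k.castSucc < kp →
        ∀ t : ℝ, xh k.castSucc < t → t < xh k.succ →
        |(χ t - x j) / (t - xh j) - 1| ≤ max |δ j k.castSucc| |δ j k.succ|) ∧
      (∀ j : Fin (n + 1), ∀ t : ℝ, xh kp < t → t < xhp →
        |(χ t - x j) / (t - xh j) - 1| ≤ max |δ j kp| |δp j|) := by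

  classical
  -- bounds on the perturbation measures
  have hdb : ∀ j k, |δ j k| ≤ d := by
    intro j k
    rw [hd]
    exact le_trans (le_trans (le_max_left _ _) (le_max_right _ _))
      (Finset.le_sup' (fun p : Fin (n + 1) × Fin (n + 1) => max |δm p.1| (max |δ p.1 p.2| |δp p.1|)) (Finset.mem_univ (j, k)))
  have hdmb : ∀ j, |δm j| ≤ d := by
    intro j
    rw [hd]
    exact le_trans (le_max_left _ _) (Finset.le_sup' (fun p : Fin (n + 1) × Fin (n + 1) => max |δm p.1| (max |δ p.1 p.2| |δp p.1|)) (Finset.mem_univ (j, j)))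
  have hdpb : ∀ j, |δp j| ≤ d := by
    intro j
    rw [hd]
    exact le_trans (le_trans (le_max_right _ _) (le_max_right _ _))
      (Finset.le_sup' (fun p : Fin (n + 1) × Fin (n + 1) => max |δm p.1| (max |δ p.1 p.2| |δp p.1|)) (Finset.mem_univ (j, j)))
  have hδpos : ∀ j k, 0 < 1 + δ j k := by
    intro j k; have := abs_le.mp (hdb j k); linarith
  have hδmpos : ∀ j, 0 < 1 + δm j := by
    intro j; have := abs_le.mp (hdmb j); linarith
  have hδppos : ∀ j, 0 < 1 + δp j := by
    intro j; have := abs_le.mp (hdpb j); linarith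
  -- the fundamental relations
  have hrel : ∀ j k : Fin (n + 1), x k - x j = (1 + δ j k) * (xh k - xh j) := by
    intro j k
    rcases eq_or_ne j k with rfl | hjk
    · simp
    · have hne : xh j ≠ xh k := by
        intro he
        have hδ1 : δ j k = -1 := by rw [hδ, if_neg hjk, he]; simp
        have := hdb j k
        rw [hδ1] at this
        simp at this
        linarith
      have h1 : x j - x k = (1 + δ j k) * (xh j - xh k) := by
        rw [hδ, if_neg hjk]
        field_simp [sub_ne_zero.mpr hne]
        ring
      linear_combination -h1
  have hxh : StrictMono xh := by
    intro j k hjk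
    have h := hrel j k
    have hx' : 0 < x k - x j := sub_pos.mpr (hx hjk)
    by_contra hcon
    push_neg at hcon
    nlinarith [hδpos j k]
  have hmrel : ∀ j, xm - x j = (1 + δm j) * (xhm - xh j) := by
    intro j
    rcases eq_or_ne xhm (xh j) with he | hne
    · have hxj : x j = xm := (him j).mpr he.symm
      rw [hxj, he]; ring
    · have hδj : δm j = (xm - x j) / (xhm - xh j) - 1 := by rw [hδm, if_neg hne]
      rw [hδj]
      field_simp [sub_ne_zero.mpr hne]
      ring
  have hprel : ∀ j, xp - x j = (1 + δp j) * (xhp - xh j) := by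
    intro j
    rcases eq_or_ne xhp (xh j) with he | hne
    · have hxj : x j = xp := (hip j).mpr he.symm
      rw [hxj, he]; ring
    · have hδj : δp j = (xp - x j) / (xhp - xh j) - 1 := by rw [hδp, if_neg hne]
      rw [hδj]
      field_simp [sub_ne_zero.mpr hne]
      ring
  -- ordering facts
  have hkmlt : ∀ k : Fin (n + 1), k < km → xh k ≤ xhm := by
    intro k hk
    have hxk : ¬ xm < x k := fun h => absurd (hkm2 k h) (not_le.mpr hk)
    push_neg at hxk
    have h := hmrel k
    have hpos := hδmpos k
    nlinarith
  have hkmgt : xhm < xh km := by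
    have h := hmrel km
    have hpos := hδmpos km
    nlinarith
  have hkplt : xh kp < xhp := by
    have h := hprel kp
    have hpos := hδppos kp
    nlinarith
  have hkpgt : ∀ k : Fin (n + 1), kp < k → xhp ≤ xh k := by
    intro k hk
    have hxk : ¬ x k < xp := fun h => absurd (hkp2 k h) (not_le.mpr hk)
    push_neg at hxk
    have h := hprel k
    have hpos := hδppos k
    nlinarith
  have hmp : xhm < xhp := lt_trans (lt_of_lt_of_le hkmgt (hxh.monotone hkmkp)) hkplt
  -- the knot sequences
  have hvkm : (km : ℕ) ≤ (kp : ℕ) := hkmkp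
  set N := (kp : ℕ) - (km : ℕ) with hN
  set idx : ℕ → Fin (n + 1) :=
    fun i => ⟨min ((km : ℕ) + i) (kp : ℕ), lt_of_le_of_lt (min_le_right _ _) kp.isLt⟩
    with hidxdef
  have hidxval : ∀ i ≤ N, (idx i : ℕ) = (km : ℕ) + i := by
    intro i hi; simp only [hidxdef]; omega
  have hidx0 : idx 0 = km := by
    apply Fin.ext; rw [hidxval 0 (Nat.zero_le _)]; omega
  have hidxN : idx N = kp := by
    apply Fin.ext; rw [hidxval N le_rfl]; omega
  set u : ℕ → ℝ :=
    fun i => if i = 0 then xhm else if i ≤ N + 1 then xh (idx (i - 1)) else xhp with hudef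
  set v : ℕ → ℝ :=
    fun i => if i = 0 then xm else if i ≤ N + 1 then x (idx (i - 1)) else xp with hvdef
  have hu0 : u 0 = xhm := by simp [hudef]
  have hv0 : v 0 = xm := by simp [hvdef]
  have huM : u (N + 2) = xhp := by simp [hudef]
  have hvM : v (N + 2) = xp := by simp [hvdef]
  have humid : ∀ i ≤ N, u (i + 1) = xh (idx i) := by
    intro i hi; simp only [hudef]; rw [if_neg (by omega), if_pos (by omega)]; simp
  have hvmid : ∀ i ≤ N, v (i + 1) = x (idx i) := by
    intro i hi; simp only [hvdef]; rw [if_neg (by omega), if_pos (by omega)]; simp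
  have hu_incr : ∀ i < N + 2, u i < u (i + 1) := by
    intro i hi
    rcases Nat.eq_zero_or_pos i with rfl | hpos
    · rw [hu0, humid 0 (Nat.zero_le _), hidx0]; exact hkmgt
    · rcases Nat.lt_or_ge i (N + 1) with h | h
      · have hi1 : i - 1 ≤ N := by omega
        have hiN : i ≤ N := by omega
        have e1 : u i = xh (idx (i - 1)) := by
          have := humid (i - 1) hi1
          rwa [Nat.sub_add_cancel hpos] at this
        rw [e1, humid i hiN]
        apply hxh
        rw [Fin.lt_def, hidxval (i - 1) hi1, hidxval i hiN]
        omega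
      · have hiN1 : i = N + 1 := by omega
        subst hiN1
        rw [humid N le_rfl, hidxN]
        have : u (N + 1 + 1) = xhp := huM
        rw [this]
        exact hkplt
  have hv_incr : ∀ i < N + 2, v i < v (i + 1) := by
    intro i hi
    rcases Nat.eq_zero_or_pos i with rfl | hpos
    · rw [hv0, hvmid 0 (Nat.zero_le _), hidx0]; exact hkm1
    · rcases Nat.lt_or_ge i (N + 1) with h | h
      · have hi1 : i - 1 ≤ N := by omega
        have hiN : i ≤ N := by omega
        have e1 : v i = x (idx (i - 1)) := by
          have := hvmid (i - 1) hi1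
          rwa [Nat.sub_add_cancel hpos] at this
        rw [e1, hvmid i hiN]
        apply hx
        rw [Fin.lt_def, hidxval (i - 1) hi1, hidxval i hiN]
        omega
      · have hiN1 : i = N + 1 := by omega
        subst hiN1
        rw [hvmid N le_rfl, hidxN]
        have : v (N + 1 + 1) = xp := hvM
        rw [this]
        exact hkp1
  -- the map
  set χ0 : ℝ → ℝ := pl u v (N + 2) with hχ0
  set χ : ℝ → ℝ := fun t =>
    if xhm ≤ t ∧ t ≤ xhp then χ0 t
    else if h : ∃ k, xh k = t then x h.choose else t with hχ
  have heqon : ∀ t, xhm ≤ t → t ≤ xhp → χ t = χ0 t := by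
    intro t h1 h2
    simp only [hχ]
    rw [if_pos ⟨h1, h2⟩]
  have hknot : ∀ j ≤ N + 2, χ0 (u j) = v j := by
    intro j hj; exact pl_knot hu_incr j hj
  have hseg : ∀ i < N + 2, ∀ t, u i ≤ t → t ≤ u (i + 1) →
      χ0 t = v i + (v (i + 1) - v i) / (u (i + 1) - u i) * (t - u i) :=
    pl_seg hu_incr
  have hsm0 : StrictMonoOn χ0 (Set.Icc xhm xhp) := by
    have := pl_strictMonoOn hu_incr hv_incr
    rwa [hu0, huM] at this
  have hsm : StrictMonoOn χ (Set.Icc xhm xhp) :=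
    hsm0.congr (fun t ht => (heqon t ht.1 ht.2).symm)
  have hχm : χ xhm = xm := by
    rw [heqon xhm le_rfl hmp.le, ← hu0, hknot 0 (by omega), hv0]
  have hχp : χ xhp = xp := by
    rw [heqon xhp hmp.le le_rfl, ← huM, hknot (N + 2) le_rfl, hvM]
  -- χ at the nodes
  have hmid_knot : ∀ k : Fin (n + 1), km ≤ k → k ≤ kp → χ (xh k) = x k := by
    intro k h1 h2
    have hkN : (k : ℕ) - (km : ℕ) ≤ N := by
      have : (km : ℕ) ≤ (k : ℕ) := h1
      have : (k : ℕ) ≤ (kp : ℕ) := h2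
      omega
    have hidxk : idx ((k : ℕ) - (km : ℕ)) = k := by
      apply Fin.ext
      rw [hidxval _ hkN]
      have : (km : ℕ) ≤ (k : ℕ) := h1
      omega
    have e1 : u ((k : ℕ) - (km : ℕ) + 1) = xh k := by rw [humid _ hkN, hidxk]
    have e2 : v ((k : ℕ) - (km : ℕ) + 1) = x k := by rw [hvmid _ hkN, hidxk]
    have hin1 : xhm ≤ xh k := le_trans hkmgt.le (hxh.monotone h1)
    have hin2 : xh k ≤ xhp := le_trans (hxh.monotone h2) hkplt.le
    rw [heqon _ hin1 hin2, ← e1, hknot _ (by omega), e2]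
  have hχnode : ∀ k, χ (xh k) = x k := by
    intro k
    rcases lt_or_ge k km with h | h
    · have hle : xh k ≤ xhm := hkmlt k h
      rcases eq_or_lt_of_le hle with he | hlt
      · have hxk : x k = xm := (him k).mpr he
        rw [he, heqon xhm le_rfl hmp.le, ← hu0, hknot 0 (by omega), hv0, hxk]
      · have hnotin : ¬ (xhm ≤ xh k ∧ xh k ≤ xhp) := fun hc => absurd hc.1 (not_le.mpr hlt)
        simp only [hχ]
        rw [if_neg hnotin, dif_pos ⟨k, rfl⟩]
        congr 1
        exact hxh.injective (Exists.choose_spec (⟨k, rfl⟩ : ∃ k', xh k' = xh k))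
    · rcases le_or_gt k kp with h2 | h2
      · exact hmid_knot k h h2
      · have hle : xhp ≤ xh k := hkpgt k h2
        rcases eq_or_lt_of_le hle with he | hlt
        · have hxk : x k = xp := (hip k).mpr he.symm
          rw [← he, heqon xhp hmp.le le_rfl, ← huM, hknot _ le_rfl, hvM, hxk]
        · have hnotin : ¬ (xhm ≤ xh k ∧ xh k ≤ xhp) := fun hc => absurd hc.2 (not_le.mpr hlt)
          simp only [hχ]
          rw [if_neg hnotin, dif_pos ⟨k, rfl⟩]
          congr 1
          exact hxh.injective (Exists.choose_spec (⟨k, rfl⟩ : ∃ k', xh k' = xh k))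
  -- bijectivity
  have heqon' : Set.EqOn χ χ0 (Set.Icc xhm xhp) := fun t ht => heqon t ht.1 ht.2
  have hbij : Set.BijOn χ (Set.Icc xhm xhp) (Set.Icc xm xp) := by
    have hmono := pl_monotone hu_incr hv_incr
    refine ⟨?_, hsm.injOn, ?_⟩
    · intro t ht
      rw [heqon t ht.1 ht.2]
      have e1 : pl u v (N + 2) xhm = xm := by rw [← hu0, pl_knot hu_incr 0 (by omega), hv0]
      have e2 : pl u v (N + 2) xhp = xp := by rw [← huM, pl_knot hu_incr (N + 2) le_rfl, hvM]
      constructor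
      · have h1 := hmono (a := xhm) (b := t) ht.1
        rw [e1] at h1
        exact h1
      · have h2 := hmono (a := t) (b := xhp) ht.2
        rw [e2] at h2
        exact h2
    · intro y hy
      have hsub := intermediate_value_Icc hmp.le (pl_continuous (u := u) (v := v) (M := N + 2)).continuousOn
      have e1 : pl u v (N + 2) xhm = xm := by rw [← hu0, pl_knot hu_incr 0 (by omega), hv0]
      have e2 : pl u v (N + 2) xhp = xp := by rw [← huM, pl_knot hu_incr (N + 2) le_rfl, hvM]
      rw [e1, e2] at hsub
      obtain ⟨s, hs, hst⟩ := hsub hy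
      exact ⟨s, hs, by rw [heqon s hs.1 hs.2, hχ0]; exact hst⟩
  -- segment locator
  have hlocate : ∀ t, xhm ≤ t → t ≤ xhp → ∃ i ≤ N + 1, u i ≤ t ∧ t ≤ u (i + 1) := by
    intro t h1 h2
    set i := Nat.findGreatest (fun i => u i ≤ t) (N + 1) with hi
    refine ⟨i, Nat.findGreatest_le _, ?_, ?_⟩
    · have := Nat.findGreatest_spec (P := fun i => u i ≤ t) (Nat.zero_le (N + 1))
        (by show u 0 ≤ t; rw [hu0]; exact h1)
      simpa [← hi] using this
    · rcases Nat.lt_or_ge i (N + 1) with h | h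
      · by_contra hcon
        exact Nat.findGreatest_is_greatest (Nat.lt_succ_self i) (by omega) (le_of_not_ge hcon)
      · have hieq : i = N + 1 := le_antisymm (Nat.findGreatest_le _) h
        rw [hieq]
        have : u (N + 1 + 1) = xhp := huM
        rw [this]
        exact h2
  -- sup norm bound at knots
  have hvu : ∀ i ≤ N + 2,
      |v i - u i| ≤ max (supNorm (fun k => x k - xh k)) (max |xm - xhm| |xp - xhp|) := by
    intro i hi
    rcases Nat.eq_zero_or_pos i with rfl | hpos
    · rw [hu0, hv0]
      exact le_trans (le_max_left _ _) (le_max_right _ _)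
    · rcases Nat.lt_or_ge i (N + 2) with h | h
      · have hiN : i - 1 ≤ N := by omega
        have e1 : u i = xh (idx (i - 1)) := by
          have := humid (i - 1) hiN; rwa [Nat.sub_add_cancel hpos] at this
        have e2 : v i = x (idx (i - 1)) := by
          have := hvmid (i - 1) hiN; rwa [Nat.sub_add_cancel hpos] at this
        rw [e1, e2]
        refine le_trans ?_ (le_max_left _ _)
        simp only [supNorm]
        exact Finset.le_sup' (fun k => |x k - xh k|) (Finset.mem_univ (idx (i - 1)))
      · have hieq : i = N + 2 := by omega
        subst hieq
        rw [huM, hvM]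
        exact le_trans (le_max_right _ _) (le_max_right _ _)
  have hdist : ∀ t ∈ Set.Icc xhm xhp,
      |χ t - t| ≤ max (supNorm (fun k => x k - xh k)) (max |xm - xhm| |xp - xhp|) := by
    intro t ht
    obtain ⟨i, hiN, h1, h2⟩ := hlocate t ht.1 ht.2
    rw [heqon t ht.1 ht.2, hseg i (by omega) t h1 h2]
    exact le_trans
      (lin_dist (u i) (u (i + 1)) (v i) (v (i + 1)) t (hu_incr i (by omega)) h1 h2)
      (max_le (hvu i (by omega)) (hvu (i + 1) (by omega)))
  -- the generic per-segment relative-error bound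
  have hcase : ∀ i < N + 2, ∀ (j : Fin (n + 1)) (t r1 r2 : ℝ),
      v i - x j = r1 * (u i - xh j) →
      v (i + 1) - x j = r2 * (u (i + 1) - xh j) →
      ((0 ≤ u i - xh j ∧ 0 ≤ u (i + 1) - xh j) ∨ (u i - xh j ≤ 0 ∧ u (i + 1) - xh j ≤ 0)) →
      u i < t → t < u (i + 1) →
      |(χ t - x j) / (t - xh j) - 1| ≤ max |r1 - 1| |r2 - 1| := by
    intro i hi j t r1 r2 h1 h2 hsgn ht1 ht2
    have hIm : xhm ≤ t :=
      le_trans (by rw [← hu0]; exact u_mono hu_incr 0 i (Nat.zero_le _) (by omega)) ht1.le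
    have hIp : t ≤ xhp :=
      le_trans ht2.le (by rw [← huM]; exact u_mono hu_incr (i + 1) (N + 2) (by omega) le_rfl)
    rw [heqon t hIm hIp, hseg i hi t ht1.le ht2.le]
    exact lin_ratio (u i) (u (i + 1)) (v i) (v (i + 1)) (x j) (xh j) t r1 r2
      (hu_incr i hi) h1 h2 hsgn ht1 ht2
  -- case (i)
  have hcase1 : ∀ (j : Fin (n + 1)) (t : ℝ), xhm < t → t < xh km →
      |(χ t - x j) / (t - xh j) - 1| ≤ max |δm j| |δ j km| := by
    intro j t ht1 ht2
    have hu1 : u (0 + 1) = xh km := by rw [humid 0 (Nat.zero_le _), hidx0]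
    have hv1 : v (0 + 1) = x km := by rw [hvmid 0 (Nat.zero_le _), hidx0]
    have h1 : v 0 - x j = (1 + δm j) * (u 0 - xh j) := by rw [hv0, hu0]; exact hmrel j
    have h2 : v (0 + 1) - x j = (1 + δ j km) * (u (0 + 1) - xh j) := by
      rw [hv1, hu1]; exact hrel j km
    have hsgn : (0 ≤ u 0 - xh j ∧ 0 ≤ u (0 + 1) - xh j) ∨
        (u 0 - xh j ≤ 0 ∧ u (0 + 1) - xh j ≤ 0) := by
      rw [hu0, hu1]
      rcases lt_or_ge j km with h | h
      · have h3 : xh j ≤ xhm := hkmlt j h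
        left; constructor <;> linarith [hkmgt]
      · have h3 : xh km ≤ xh j := hxh.monotone h
        right; constructor <;> linarith [hkmgt]
    have hb := hcase 0 (by omega) j t (1 + δm j) (1 + δ j km) h1 h2 hsgn
      (by rw [hu0]; exact ht1) (by rw [hu1]; exact ht2)
    simpa using hb
  -- case (ii)
  have hcase2 : ∀ (j : Fin (n + 1)) (k : Fin n), km ≤ k.castSucc → k.castSucc < kp →
      ∀ t : ℝ, xh k.castSucc < t → t < xh k.succ →
      |(χ t - x j) / (t - xh j) - 1| ≤ max |δ j k.castSucc| |δ j k.succ| := by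
    intro j k hk1 hk2 t ht1 ht2
    have hb1 : (km : ℕ) ≤ (k : ℕ) := by
      have := hk1; rw [Fin.le_def] at this; simpa using this
    have hb2 : (k : ℕ) < (kp : ℕ) := by
      have := hk2; rw [Fin.lt_def] at this; simpa using this
    set m := (k : ℕ) - (km : ℕ) with hm
    have hmN : m + 1 ≤ N := by omega
    have hidxm : idx m = k.castSucc := by
      apply Fin.ext; rw [hidxval m (by omega), Fin.coe_castSucc]; omega
    have hidxm1 : idx (m + 1) = k.succ := by
      apply Fin.ext; rw [hidxval (m + 1) hmN, Fin.val_succ]; omega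
    have eu1 : u (m + 1) = xh k.castSucc := by rw [humid m (by omega), hidxm]
    have eu2 : u (m + 1 + 1) = xh k.succ := by rw [humid (m + 1) hmN, hidxm1]
    have ev1 : v (m + 1) = x k.castSucc := by rw [hvmid m (by omega), hidxm]
    have ev2 : v (m + 1 + 1) = x k.succ := by rw [hvmid (m + 1) hmN, hidxm1]
    have h1 : v (m + 1) - x j = (1 + δ j k.castSucc) * (u (m + 1) - xh j) := by
      rw [ev1, eu1]; exact hrel j k.castSucc
    have h2 : v (m + 1 + 1) - x j = (1 + δ j k.succ) * (u (m + 1 + 1) - xh j) := by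
      rw [ev2, eu2]; exact hrel j k.succ
    have hsgn : (0 ≤ u (m + 1) - xh j ∧ 0 ≤ u (m + 1 + 1) - xh j) ∨
        (u (m + 1) - xh j ≤ 0 ∧ u (m + 1 + 1) - xh j ≤ 0) := by
      rw [eu1, eu2]
      rcases le_or_gt j k.castSucc with h | h
      · have h3 : xh j ≤ xh k.castSucc := hxh.monotone h
        have h4 : xh k.castSucc < xh k.succ := hxh (Fin.castSucc_lt_succ : k.castSucc < k.succ)
        left; constructor <;> linarith
      · have h5 : k.succ ≤ j := Fin.castSucc_lt_iff_succ_le.mp h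
        have h3 : xh k.succ ≤ xh j := hxh.monotone h5
        have h4 : xh k.castSucc < xh k.succ := hxh (Fin.castSucc_lt_succ : k.castSucc < k.succ)
        right; constructor <;> linarith
    have hb := hcase (m + 1) (by omega) j t (1 + δ j k.castSucc) (1 + δ j k.succ) h1 h2 hsgn
      (by rw [eu1]; exact ht1) (by rw [eu2]; exact ht2)
    simpa using hb
  -- case (iii)
  have hcase3 : ∀ (j : Fin (n + 1)) (t : ℝ), xh kp < t → t < xhp →
      |(χ t - x j) / (t - xh j) - 1| ≤ max |δ j kp| |δp j| := by
    intro j t ht1 ht2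
    have euN : u (N + 1) = xh kp := by rw [humid N le_rfl, hidxN]
    have evN : v (N + 1) = x kp := by rw [hvmid N le_rfl, hidxN]
    have euM : u (N + 1 + 1) = xhp := huM
    have evM : v (N + 1 + 1) = xp := hvM
    have h1 : v (N + 1) - x j = (1 + δ j kp) * (u (N + 1) - xh j) := by
      rw [evN, euN]; exact hrel j kp
    have h2 : v (N + 1 + 1) - x j = (1 + δp j) * (u (N + 1 + 1) - xh j) := by
      rw [evM, euM]; exact hprel j
    have hsgn : (0 ≤ u (N + 1) - xh j ∧ 0 ≤ u (N + 1 + 1) - xh j) ∨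
        (u (N + 1) - xh j ≤ 0 ∧ u (N + 1 + 1) - xh j ≤ 0) := by
      rw [euN, euM]
      rcases le_or_gt j kp with h | h
      · have h3 : xh j ≤ xh kp := hxh.monotone h
        left; constructor <;> linarith [hkplt]
      · have h3 : xhp ≤ xh j := hkpgt j h
        right; constructor <;> linarith [hkplt]
    have hb := hcase (N + 1) (by omega) j t (1 + δ j kp) (1 + δp j) h1 h2 hsgn
      (by rw [euN]; exact ht1) (by rw [euM]; exact ht2)
    simpa using hb
  exact ⟨fun k => hxh (Fin.castSucc_lt_succ : k.castSucc < k.succ),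
    χ, hsm, hbij, hχm, hχnode, hχp, hdist, hcase1, hcase2, hcase3⟩
end

section
/- Let x_0 < … < x_n be nodes with nonzero weights w_0, …, w_n such that Σ_{k=0}^n w_k/(t − x_k) ≠ 0 for all t ∈ [x⁻, x⁺] outside the nodes, and let Λ denote the (finite) Lebesgue constant Λ_{x⁻,x⁺,x,w}. Let x̂_0, …, x̂_n be perturbed nodes with nonzero perturbed weights ŵ_0, …, ŵ_n, set ζ_k := (w_k − ŵ_k)/ŵ_k and ‖ζ‖_∞ := max_k |ζ_k|. Let x̂ ∈ [x̂⁻, x̂⁺] with x̂ ∉ {x̂_0, …, x̂_n}, let χ(x̂) ∈ [x⁻, x⁺] with χ(x̂) ∉ {x_0, …, x_n}, and suppose d ∈ ℝ satisfies max_{0 ≤ k ≤ n} |(χ(x̂) − x_k)/(x̂ − x̂_k) − 1| ≤ d < (1 − ‖ζ‖_∞)/Λ − ‖ζ‖_∞. Then Σ_{k=0}^n ŵ_k/(x̂ − x̂_k) ≠ 0. -/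
/-- The barycentric interpolant `I_{x,w}(y)`: it takes the value `y_k` at a node
`x_k`, and the value of the second barycentric formula elsewhere. -/
noncomputable def bary {n : ℕ} (x w y : Fin (n + 1) → ℝ) (t : ℝ) : ℝ :=
  if h : ∃ k, t = x k then y h.choose
  else (∑ k, w k * y k / (t - x k)) / (∑ k, w k / (t - x k))

/-- The set of quotients `|I_{x,w}(y)(t)| / ‖y‖_∞` for `t ∈ [a, b]` and `y ≠ 0`,
whose supremum is the Lebesgue constant `Λ_{a,b,x,w}`. -/
def lebesgueSet {n : ℕ} (x w : Fin (n + 1) → ℝ) (a b : ℝ) : Set ℝ :=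
  {r | ∃ t ∈ Set.Icc a b, ∃ y : Fin (n + 1) → ℝ, y ≠ 0 ∧ r = |bary x w y t| / supNorm y}

/-- With nodes `x`, nonzero weights `w`, a nonvanishing denominator on `[x⁻, x⁺]`,
finite Lebesgue constant `Λ`, perturbed nodes `x̂` and nonzero perturbed weights
`ŵ`, `ζ_k := (w_k − ŵ_k)/ŵ_k`: if `x̂ ∈ [x̂⁻, x̂⁺]` is not a perturbed node,
`χ(x̂) ∈ [x⁻, x⁺]` is not a node, and
`max_k |(χ(x̂) − x_k)/(x̂ − x̂_k) − 1| ≤ d < (1 − ‖ζ‖_∞)/Λ − ‖ζ‖_∞`,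
then `Σ_k ŵ_k/(x̂ − x̂_k) ≠ 0`. -/
theorem perturbed_denominator_ne_zero
    (n : ℕ) (x w xh wh : Fin (n + 1) → ℝ) (xm xp xhm xhp : ℝ)
    (hx : StrictMono x) (hle : xm ≤ xp)
    (hw : ∀ k, w k ≠ 0) (hwh : ∀ k, wh k ≠ 0)
    (hden : ∀ t ∈ Set.Icc xm xp, (∀ k, t ≠ x k) → (∑ k, w k / (t - x k)) ≠ 0)
    (Λ : ℝ) (hΛ : IsLUB (lebesgueSet x w xm xp) Λ)
    (ζ : Fin (n + 1) → ℝ) (hζ : ∀ k, ζ k = (w k - wh k) / wh k)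
    (th : ℝ) (hth : th ∈ Set.Icc xhm xhp) (hthn : ∀ k, th ≠ xh k)
    (s : ℝ) (hs : s ∈ Set.Icc xm xp) (hsn : ∀ k, s ≠ x k)
    (d : ℝ)
    (hd1 : ∀ k, |(s - x k) / (th - xh k) - 1| ≤ d)
    (hd2 : d < (1 - supNorm ζ) / Λ - supNorm ζ) :
    (∑ k, wh k / (th - xh k)) ≠ 0 := by
  set S := supNorm ζ with hSdef
  have hζle : ∀ k, |ζ k| ≤ S := fun k => by
    rw [hSdef]; unfold supNorm
    exact Finset.le_sup' (fun j => |ζ j|) (Finset.mem_univ k)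
  have hS0 : 0 ≤ S := le_trans (abs_nonneg _) (hζle 0)
  have hd0 : 0 ≤ d := le_trans (abs_nonneg _) (hd1 0)
  -- Λ ≥ 1
  have hone : (1:ℝ) ∈ lebesgueSet x w xm xp := by
    refine ⟨xm, ⟨le_refl xm, hle⟩, fun _ => 1, ?_, ?_⟩
    · intro h; have := congrFun h 0; simp at this
    · have hsup : supNorm (fun _ : Fin (n+1) => (1:ℝ)) = 1 := by
        simp [supNorm]
      rw [hsup]
      by_cases h : ∃ k, xm = x k
      · simp [bary, h]
      · have hne : ∀ k, xm ≠ x k := by push_neg at h; exact h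
        have hD := hden xm ⟨le_refl _, hle⟩ hne
        rw [bary, dif_neg h]
        simp only [mul_one]
        rw [div_self hD]
        norm_num
  have hΛ1 : 1 ≤ Λ := hΛ.1 hone
  have hΛ0 : 0 < Λ := lt_of_lt_of_le one_pos hΛ1
  have key : (d + S) * Λ < 1 - S := by
    have h1 : d + S < (1 - S) / Λ := by linarith
    exact (lt_div_iff₀ hΛ0).mp h1
  have hS1 : S < 1 := by
    have : 0 ≤ (d + S) * Λ := mul_nonneg (by linarith) hΛ0.le
    linarith
  have hthk : ∀ k, th - xh k ≠ 0 := fun k => sub_ne_zero.mpr (hthn k)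
  have hsk : ∀ k, s - x k ≠ 0 := fun k => sub_ne_zero.mpr (hsn k)
  have hζabs : ∀ k, 1 - S ≤ |1 + ζ k| := by
    intro k
    have h := abs_add_le (1 + ζ k) (-ζ k)
    have h2 : 1 + ζ k + -ζ k = 1 := by ring
    rw [h2, abs_neg, abs_one] at h
    linarith [hζle k]
  have hζk : ∀ k, 1 + ζ k ≠ 0 := by
    intro k h
    have h3 := hζabs k
    rw [h, abs_zero] at h3
    linarith
  set y : Fin (n + 1) → ℝ := fun k => (s - x k) / ((th - xh k) * (1 + ζ k)) - 1 with hy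
  have claimA : ∀ k, wh k / (th - xh k) = w k / (s - x k) + w k * y k / (s - x k) := by
    intro k
    have h1 : wh k * (1 + ζ k) = w k := by
      have h0 := hwh k
      rw [hζ k]; field_simp
      ring
    have h2 := hthk k; have h3 := hsk k; have h4 := hζk k
    rw [hy, ← h1]
    field_simp
    ring
  have hsum : (∑ k, wh k / (th - xh k))
      = (∑ k, w k / (s - x k)) + ∑ k, w k * y k / (s - x k) := by
    rw [← Finset.sum_add_distrib]
    exact Finset.sum_congr rfl fun k _ => claimA k
  have hD := hden s hs hsn
  have hybound : ∀ k, |y k| ≤ (d + S) / (1 - S) := by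
    intro k
    have h1 : y k = ((s - x k) / (th - xh k) - (1 + ζ k)) / (1 + ζ k) := by
      have h2 := hthk k; have h3 := hζk k
      rw [hy]
      field_simp
    rw [h1, abs_div]
    have h2 : |(s - x k) / (th - xh k) - (1 + ζ k)| ≤ d + S := by
      have := hd1 k
      have h3 : (s - x k) / (th - xh k) - (1 + ζ k)
          = ((s - x k) / (th - xh k) - 1) - ζ k := by ring
      rw [h3]
      calc |((s - x k) / (th - xh k) - 1) - ζ k|
          ≤ |(s - x k) / (th - xh k) - 1| + |ζ k| := abs_sub _ _
        _ ≤ d + S := add_le_add (hd1 k) (hζle k)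
    exact div_le_div₀ (by linarith) h2 (by linarith) (hζabs k)
  by_cases hy0 : y = 0
  · have : ∀ k, w k * y k / (s - x k) = 0 := by
      intro k; rw [hy0]; simp
    rw [hsum, Finset.sum_congr rfl fun k _ => this k]
    simpa using hD
  · have hsupy : 0 < supNorm y := by
      obtain ⟨k, hk⟩ : ∃ k, y k ≠ 0 := by
        by_contra h; push_neg at h; exact hy0 (funext h)
      have h2 : |y k| ≤ supNorm y := by
        unfold supNorm; exact Finset.le_sup' (fun j => |y j|) (Finset.mem_univ k)
      exact lt_of_lt_of_le (abs_pos.mpr hk) h2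
    have hbary : bary x w y s = (∑ k, w k * y k / (s - x k)) / (∑ k, w k / (s - x k)) := by
      rw [bary, dif_neg]
      push_neg
      exact hsn
    have hmem : |bary x w y s| / supNorm y ∈ lebesgueSet x w xm xp :=
      ⟨s, hs, y, hy0, rfl⟩
    have hle' : |bary x w y s| / supNorm y ≤ Λ := hΛ.1 hmem
    have hsupyle : supNorm y ≤ (d + S) / (1 - S) := by
      unfold supNorm; exact Finset.sup'_le _ _ fun k _ => hybound k
    have hNbound : |bary x w y s| < 1 := by
      have h1 : |bary x w y s| ≤ Λ * supNorm y := (div_le_iff₀ hsupy).mp hle'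
      have h2 : Λ * supNorm y ≤ Λ * ((d + S) / (1 - S)) :=
        mul_le_mul_of_nonneg_left hsupyle hΛ0.le
      have h3 : Λ * ((d + S) / (1 - S)) < 1 := by
        rw [mul_div_assoc'] at *
        rw [div_lt_one (by linarith)]
        nlinarith
      linarith
    rw [hbary, abs_div] at hNbound
    have hNltD : |∑ k, w k * y k / (s - x k)| < |∑ k, w k / (s - x k)| := by
      rw [div_lt_one (abs_pos.mpr hD)] at hNbound
      exact hNbound
    rw [hsum]
    intro h
    have : (∑ k, w k * y k / (s - x k)) = -(∑ k, w k / (s - x k)) := by linarith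
    rw [this, abs_neg] at hNltD
    linarith
end

section
/- Let x_0 < … < x_n be nodes with nonzero weights w_0, …, w_n such that Σ_{k=0}^n w_k/(t − x_k) ≠ 0 for all t ∈ [x⁻, x⁺] outside the nodes, and let Λ denote the (finite) Lebesgue constant Λ_{x⁻,x⁺,x,w}. Let x̂_0, …, x̂_n be perturbed nodes with nonzero perturbed weights ŵ_0, …, ŵ_n, set ζ_k := (w_k − ŵ_k)/ŵ_k and ‖ζ‖_∞ := max_k |ζ_k|. Let x̂ ∈ [x̂⁻, x̂⁺] with x̂ ∉ {x̂_0, …, x̂_n}, let χ(x̂) ∈ [x⁻, x⁺] with χ(x̂) ∉ {x_0, …, x_n}, and suppose d ∈ ℝ satisfies max_{0 ≤ k ≤ n} |(χ(x̂) − x_k)/(x̂ − x̂_k) − 1| ≤ d < (1 − ‖ζ‖_∞)/Λ − ‖ζ‖_∞. Then for every y ∈ ℝ^{n+1} there exists β ∈ ℝ^{n+1} with ‖β‖_∞ ≤ (d + ‖ζ‖_∞)(1 + Λ) / (1 − ‖ζ‖_∞ − (d + ‖ζ‖_∞)Λ) such that I_{x̂,ŵ}(y)(x̂) = I_{x,w}(ỹ)(χ(x̂)),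 where ỹ_k := y_k(1 + β_k). -/
lemma le_supNorm {n : ℕ} (y : Fin (n + 1) → ℝ) (k : Fin (n + 1)) :
    |y k| ≤ supNorm y :=
  Finset.le_sup' (fun k => |y k|) (Finset.mem_univ k)

lemma supNorm_nonneg {n : ℕ} (y : Fin (n + 1) → ℝ) : 0 ≤ supNorm y :=
  (abs_nonneg _).trans (le_supNorm y 0)

lemma supNorm_le' {n : ℕ} (y : Fin (n + 1) → ℝ) (c : ℝ) (h : ∀ k, |y k| ≤ c) :
    supNorm y ≤ c :=
  Finset.sup'_le _ _ fun k _ => h k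

lemma bary_not_node {n : ℕ} (x w y : Fin (n + 1) → ℝ) (t : ℝ) (h : ∀ k, t ≠ x k) :
    bary x w y t = (∑ k, w k * y k / (t - x k)) / (∑ k, w k / (t - x k)) := by
  rw [bary, dif_neg]
  push_neg
  exact h

/-- One is in the Lebesgue set (constant interpolant). -/
lemma one_mem_lebesgueSet {n : ℕ} (x w : Fin (n + 1) → ℝ) (xm xp : ℝ) (hle : xm ≤ xp)
    (hden : ∀ t ∈ Set.Icc xm xp, (∀ k, t ≠ x k) → (∑ k, w k / (t - x k)) ≠ 0) :
    (1 : ℝ) ∈ lebesgueSet x w xm xp := by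
  refine ⟨xm, ⟨le_refl xm, hle⟩, fun _ => 1, ?_, ?_⟩
  · intro h
    simpa using congrFun h 0
  · have hsup : supNorm (fun _ : Fin (n + 1) => (1 : ℝ)) = 1 := by
      simp [supNorm]
    rw [hsup]
    by_cases h : ∃ k, xm = x k
    · rw [bary, dif_pos h]
      norm_num
    · push_neg at h
      rw [bary_not_node x w _ xm h]
      have hd : (∑ k, w k / (xm - x k)) ≠ 0 := hden xm ⟨le_refl xm, hle⟩ h
      have : (∑ k, w k * (fun _ : Fin (n+1) => (1:ℝ)) k / (xm - x k)) = ∑ k, w k / (xm - x k) := by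
        apply Finset.sum_congr rfl
        intro k _
        ring
      rw [this, div_self hd]
      norm_num

/-- The Lebesgue-constant bound: `|I_{x,w}(ε)(t)| ≤ Λ ‖ε‖_∞`. -/
lemma abs_bary_le {n : ℕ} (x w : Fin (n + 1) → ℝ) (xm xp : ℝ)
    (hden : ∀ t ∈ Set.Icc xm xp, (∀ k, t ≠ x k) → (∑ k, w k / (t - x k)) ≠ 0)
    (Λ : ℝ) (hΛ : IsLUB (lebesgueSet x w xm xp) Λ)
    (t : ℝ) (ht : t ∈ Set.Icc xm xp) (htn : ∀ k, t ≠ x k)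
    (ε : Fin (n + 1) → ℝ) : |bary x w ε t| ≤ Λ * supNorm ε := by
  by_cases hε : ε = 0
  · subst hε
    have h0 : bary x w 0 t = 0 := by
      rw [bary_not_node x w _ t htn]
      simp
    have hs0 : supNorm (0 : Fin (n + 1) → ℝ) = 0 := by
      simp [supNorm]
    rw [h0, hs0, mul_zero, abs_zero]
  · have hpos : 0 < supNorm ε := by
      rcases Function.ne_iff.mp hε with ⟨k, hk⟩
      exact lt_of_lt_of_le (abs_pos.mpr hk) (le_supNorm ε k)
    have hmem : |bary x w ε t| / supNorm ε ∈ lebesgueSet x w xm xp :=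
      ⟨t, ht, ε, hε, rfl⟩
    have := hΛ.1 hmem
    rw [div_le_iff₀ hpos] at this
    linarith [this]

/-- Under the hypotheses of Statement 5, for every `y ∈ ℝ^{n+1}` there is
`β ∈ ℝ^{n+1}` with `‖β‖_∞ ≤ (d + ‖ζ‖_∞)(1 + Λ)/(1 − ‖ζ‖_∞ − (d + ‖ζ‖_∞)Λ)`
such that `I_{x̂,ŵ}(y)(x̂) = I_{x,w}(ỹ)(χ(x̂))` where `ỹ_k = y_k(1 + β_k)`. -/
theorem perturbed_interpolant_backward_error
    (n : ℕ) (x w xh wh : Fin (n + 1) → ℝ) (xm xp xhm xhp : ℝ)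
    (hx : StrictMono x) (hle : xm ≤ xp)
    (hw : ∀ k, w k ≠ 0) (hwh : ∀ k, wh k ≠ 0)
    (hden : ∀ t ∈ Set.Icc xm xp, (∀ k, t ≠ x k) → (∑ k, w k / (t - x k)) ≠ 0)
    (Λ : ℝ) (hΛ : IsLUB (lebesgueSet x w xm xp) Λ)
    (ζ : Fin (n + 1) → ℝ) (hζ : ∀ k, ζ k = (w k - wh k) / wh k)
    (th : ℝ) (hth : th ∈ Set.Icc xhm xhp) (hthn : ∀ k, th ≠ xh k)
    (s : ℝ) (hs : s ∈ Set.Icc xm xp) (hsn : ∀ k, s ≠ x k)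
    (d : ℝ)
    (hd1 : ∀ k, |(s - x k) / (th - xh k) - 1| ≤ d)
    (hd2 : d < (1 - supNorm ζ) / Λ - supNorm ζ) :
    ∀ y : Fin (n + 1) → ℝ, ∃ β : Fin (n + 1) → ℝ,
      supNorm β ≤ (d + supNorm ζ) * (1 + Λ) / (1 - supNorm ζ - (d + supNorm ζ) * Λ) ∧
      bary xh wh y th = bary x w (fun k => y k * (1 + β k)) s := by
  intro y
  set z : ℝ := supNorm ζ with hz
  -- basic positivity facts
  have hΛ1 : (1 : ℝ) ≤ Λ := hΛ.1 (one_mem_lebesgueSet x w xm xp hle hden)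
  have hΛ0 : (0 : ℝ) < Λ := lt_of_lt_of_le one_pos hΛ1
  have hd0 : 0 ≤ d := le_trans (abs_nonneg _) (hd1 0)
  have hz0 : 0 ≤ z := supNorm_nonneg ζ
  have hdz : (d + z) * Λ < 1 - z := by
    rw [← lt_div_iff₀ hΛ0]
    linarith [hd2]
  have hz1 : z < 1 := by nlinarith [mul_nonneg (by linarith : (0:ℝ) ≤ d + z) hΛ0.le]
  have h1z : (0 : ℝ) < 1 - z := by linarith
  -- relative perturbations
  set ε : Fin (n + 1) → ℝ := fun k => ((s - x k) / (th - xh k) - 1 - ζ k) / (1 + ζ k) with hεdef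
  have h1ζ : ∀ k, 1 + ζ k = w k / wh k := by
    intro k
    rw [hζ k]
    field_simp [hwh k]
    ring
  have h1ζ0 : ∀ k, 1 + ζ k ≠ 0 := fun k => (h1ζ k) ▸ div_ne_zero (hw k) (hwh k)
  have hζb : ∀ k, |ζ k| ≤ z := fun k => le_supNorm ζ k
  have hεb : ∀ k, |ε k| ≤ (d + z) / (1 - z) := by
    intro k
    have hεk : ε k = ((s - x k) / (th - xh k) - 1 - ζ k) / (1 + ζ k) := by
      rw [hεdef]
    rw [hεk, abs_div]
    apply div_le_div₀ (by linarith) _ h1z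
    · have habs : |(1:ℝ)| ≤ |1 + ζ k| + |ζ k| := by
        simpa using abs_add_le (1 + ζ k) (-(ζ k))
      rw [abs_one] at habs
      linarith [hζb k]
    · calc |(s - x k) / (th - xh k) - 1 - ζ k|
          ≤ |(s - x k) / (th - xh k) - 1| + |ζ k| := abs_sub _ _
        _ ≤ d + z := add_le_add (hd1 k) (hζb k)
  set m : ℝ := supNorm ε with hm
  have hm0 : 0 ≤ m := supNorm_nonneg ε
  have hmδ : m ≤ (d + z) / (1 - z) := supNorm_le' ε _ hεb
  have hΛm : Λ * m < 1 := by
    calc Λ * m ≤ Λ * ((d + z) / (1 - z)) := by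
          exact mul_le_mul_of_nonneg_left hmδ hΛ0.le
      _ < 1 := by
          rw [mul_div_assoc'] at *
          rw [div_lt_one h1z]
          nlinarith
  -- the key term identity
  have hterm : ∀ k, wh k / (th - xh k) = w k * (1 + ε k) / (s - x k) := by
    intro k
    have hthk : th - xh k ≠ 0 := sub_ne_zero_of_ne (hthn k)
    have hsk : s - x k ≠ 0 := sub_ne_zero_of_ne (hsn k)
    have h1 : 1 + ε k = ((s - x k) / (th - xh k)) / (1 + ζ k) := by
      have hεk : ε k = ((s - x k) / (th - xh k) - 1 - ζ k) / (1 + ζ k) := by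
        rw [hεdef]
      rw [hεk]
      field_simp [h1ζ0 k, hthk]
      ring
    rw [h1, h1ζ k]
    field_simp [hw k, hwh k, hthk, hsk]
  -- the quotient r := I(ε)(s)
  set N : ℝ := ∑ k, w k / (s - x k) with hN
  have hN0 : N ≠ 0 := hden s hs hsn
  set r : ℝ := bary x w ε s with hr
  have hrb : |r| ≤ Λ * m := abs_bary_le x w xm xp hden Λ hΛ s hs hsn ε
  have h1r : (0 : ℝ) < 1 + r := by
    have := abs_le.mp hrb
    linarith
  have h1r0 : (1 : ℝ) + r ≠ 0 := ne_of_gt h1r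
  have hrN : (∑ k, w k * ε k / (s - x k)) = r * N := by
    have : r = (∑ k, w k * ε k / (s - x k)) / N := bary_not_node x w ε s hsn
    rw [this, div_mul_cancel₀ _ hN0]
  -- define β
  refine ⟨fun k => (ε k - r) / (1 + r), ?_, ?_⟩
  · -- the bound
    apply supNorm_le'
    intro k
    show |(ε k - r) / (1 + r)| ≤ _
    rw [abs_div, abs_of_pos h1r]
    have hnum : |ε k - r| ≤ m * (1 + Λ) := by
      calc |ε k - r| ≤ |ε k| + |r| := abs_sub _ _
        _ ≤ m + Λ * m := add_le_add (le_supNorm ε k) hrb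
        _ = m * (1 + Λ) := by ring
    have hden2 : 1 - Λ * m ≤ 1 + r := by
      have := abs_le.mp hrb
      linarith
    have h1 : |ε k - r| / (1 + r) ≤ m * (1 + Λ) / (1 - Λ * m) := by
      apply div_le_div₀ (by nlinarith) hnum (by linarith) hden2
    refine h1.trans ?_
    rw [div_le_div_iff₀ (by linarith) (by nlinarith)]
    have hmz : m * (1 - z) ≤ d + z := by
      rw [← le_div_iff₀ h1z]
      exact hmδ
    nlinarith [mul_nonneg hm0 (by linarith : (0:ℝ) ≤ 1 - z)]
  · -- the interpolant identity
    have hNum : (∑ k, wh k * y k / (th - xh k)) = ∑ k, w k * ((1 + ε k) * y k) / (s - x k) := by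
      apply Finset.sum_congr rfl
      intro k _
      calc wh k * y k / (th - xh k) = wh k / (th - xh k) * y k := by ring
        _ = w k * (1 + ε k) / (s - x k) * y k := by rw [hterm k]
        _ = w k * ((1 + ε k) * y k) / (s - x k) := by ring
    have hDen : (∑ k, wh k / (th - xh k)) = (1 + r) * N := by
      calc (∑ k, wh k / (th - xh k)) = ∑ k, w k * (1 + ε k) / (s - x k) :=
            Finset.sum_congr rfl fun k _ => hterm k
        _ = ∑ k, (w k / (s - x k) + w k * ε k / (s - x k)) := by
            apply Finset.sum_congr rfl
            intro k _
            ring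
        _ = N + r * N := by rw [Finset.sum_add_distrib, hrN]
        _ = (1 + r) * N := by ring
    have hRHSnum : (∑ k, w k * (y k * (1 + (ε k - r) / (1 + r))) / (s - x k))
        = (∑ k, w k * ((1 + ε k) * y k) / (s - x k)) / (1 + r) := by
      rw [Finset.sum_div]
      apply Finset.sum_congr rfl
      intro k _
      have h2 : 1 + (ε k - r) / (1 + r) = (1 + ε k) / (1 + r) := by
        field_simp
        ring
      rw [h2]
      field_simp
    rw [bary_not_node xh wh y th hthn, bary_not_node x w _ s hsn]
    rw [hNum, hDen, hRHSnum]
    rw [div_div]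
end

section
/- Let x_0 < … < x_n be nodes with nonzero weights w_0, …, w_n such that Σ_{k=0}^n w_k/(t − x_k) ≠ 0 for all t ∈ [x⁻, x⁺] outside the nodes, and let Λ denote the (finite) Lebesgue constant Λ_{x⁻,x⁺,x,w}. Let x̂_0, …, x̂_n be perturbed nodes and ŵ_0, …, ŵ_n nonzero perturbed weights, set ζ_k := (w_k − ŵ_k)/ŵ_k, ‖ζ‖_∞ := max_k |ζ_k|. Let x̂ be a real number with x̂ ∉ {x̂_0, …, x̂_n}, let s ∈ [x⁻, x⁺] with s ∉ {x_0, …, x_n}, set ν_k := (s − x_k)/(x̂ − x̂_k) − 1, and suppose d ∈ ℝ satisfies max_k |ν_k| ≤ d < (1 − ‖ζ‖_∞)/Λ − ‖ζ‖_∞. Define D := Σ_{k=0}^n w_k/(s − x_k), σ_k := (ν_k − ζ_k)/(1 + ζ_k), and E := (1/D)·Σ_{k=0}^n w_k σ_k/(s − x_k). Then Σ_{k=0}^n ŵ_k/(x̂ − x̂_k) = D(1 + E) and |E| ≤ Λ·(d + ‖ζ‖_∞)/(1 − ‖ζ‖_∞) < 1. -/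
/-- With `ν_k := (s − x_k)/(x̂ − x̂_k) − 1`, `max_k |ν_k| ≤ d < (1 − ‖ζ‖_∞)/Λ − ‖ζ‖_∞`,
`D := Σ_k w_k/(s − x_k)`, `σ_k := (ν_k − ζ_k)/(1 + ζ_k)` and
`E := (1/D)·Σ_k w_k σ_k/(s − x_k)`, one has
`Σ_k ŵ_k/(x̂ − x̂_k) = D(1 + E)` and `|E| ≤ Λ(d + ‖ζ‖_∞)/(1 − ‖ζ‖_∞) < 1`. -/
theorem perturbed_denominator_decomposition
    (n : ℕ) (x w xh wh : Fin (n + 1) → ℝ) (xm xp : ℝ)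
    (hx : StrictMono x) (hle : xm ≤ xp)
    (hw : ∀ k, w k ≠ 0) (hwh : ∀ k, wh k ≠ 0)
    (hden : ∀ t ∈ Set.Icc xm xp, (∀ k, t ≠ x k) → (∑ k, w k / (t - x k)) ≠ 0)
    (Λ : ℝ) (hΛ : IsLUB (lebesgueSet x w xm xp) Λ)
    (ζ : Fin (n + 1) → ℝ) (hζ : ∀ k, ζ k = (w k - wh k) / wh k)
    (th : ℝ) (hthn : ∀ k, th ≠ xh k)
    (s : ℝ) (hs : s ∈ Set.Icc xm xp) (hsn : ∀ k, s ≠ x k)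
    (ν : Fin (n + 1) → ℝ) (hν : ∀ k, ν k = (s - x k) / (th - xh k) - 1)
    (d : ℝ)
    (hd1 : ∀ k, |ν k| ≤ d)
    (hd2 : d < (1 - supNorm ζ) / Λ - supNorm ζ)
    (D E : ℝ) (σ : Fin (n + 1) → ℝ)
    (hD : D = ∑ k, w k / (s - x k))
    (hσ : ∀ k, σ k = (ν k - ζ k) / (1 + ζ k))
    (hE : E = (1 / D) * ∑ k, w k * σ k / (s - x k)) :
    (∑ k, wh k / (th - xh k)) = D * (1 + E) ∧
      |E| ≤ Λ * (d + supNorm ζ) / (1 - supNorm ζ) ∧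
      Λ * (d + supNorm ζ) / (1 - supNorm ζ) < 1 := by
  -- basic nonvanishing facts
  have hsx : ∀ k, s - x k ≠ 0 := fun k => sub_ne_zero.mpr (hsn k)
  have hxhne : ∀ k, th - xh k ≠ 0 := fun k => sub_ne_zero.mpr (hthn k)
  have hDne : D ≠ 0 := by rw [hD]; exact hden s hs hsn
  have h1ζ : ∀ k, 1 + ζ k = w k / wh k := by
    intro k; rw [hζ k, sub_div, div_self (hwh k)]; ring
  have h1ζne : ∀ k, 1 + ζ k ≠ 0 := by
    intro k; rw [h1ζ k]; exact div_ne_zero (hw k) (hwh k)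
  -- supNorm basics
  have hζle : ∀ k, |ζ k| ≤ supNorm ζ := fun k =>
    Finset.le_sup' (fun k => |ζ k|) (Finset.mem_univ k)
  have hζ0 : 0 ≤ supNorm ζ := le_trans (abs_nonneg _) (hζle 0)
  have hd0 : 0 ≤ d := le_trans (abs_nonneg _) (hd1 0)
  -- Λ ≥ 1
  have hnex : ¬ ∃ k, s = x k := by push_neg; exact hsn
  have h1mem : (1 : ℝ) ∈ lebesgueSet x w xm xp := by
    refine ⟨s, hs, fun _ => 1, ?_, ?_⟩
    · intro h
      exact one_ne_zero (congrFun h 0)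
    · have hsup : supNorm (fun _ : Fin (n+1) => (1:ℝ)) = 1 := by
        simp [supNorm]
      rw [bary, dif_neg hnex, hsup]
      have hnum : (∑ k, w k * (fun _ : Fin (n+1) => (1:ℝ)) k / (s - x k))
          = ∑ k, w k / (s - x k) := by
        apply Finset.sum_congr rfl; intros; simp
      rw [hnum, div_self (hden s hs hsn)]
      norm_num
  have hΛ1 : (1 : ℝ) ≤ Λ := hΛ.1 h1mem
  have hΛ0 : (0 : ℝ) < Λ := lt_of_lt_of_le one_pos hΛ1
  -- 1 - ‖ζ‖ > 0
  have hζlt1 : supNorm ζ < 1 := by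
    by_contra hcon
    push_neg at hcon
    have h1 : (1 - supNorm ζ) / Λ ≤ 0 :=
      div_nonpos_of_nonpos_of_nonneg (by linarith) hΛ0.le
    linarith
  have h1ζpos : (0 : ℝ) < 1 - supNorm ζ := by linarith
  -- key inequality form of hd2
  have hd2' : Λ * (d + supNorm ζ) < 1 - supNorm ζ := by
    have h : d + supNorm ζ < (1 - supNorm ζ) / Λ := by linarith
    calc Λ * (d + supNorm ζ) < Λ * ((1 - supNorm ζ) / Λ) :=
          mul_lt_mul_of_pos_left h hΛ0
      _ = 1 - supNorm ζ := by field_simp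
  have hthird : Λ * (d + supNorm ζ) / (1 - supNorm ζ) < 1 :=
    (div_lt_one h1ζpos).mpr hd2'
  -- termwise identity
  have hterm : ∀ k, wh k / (th - xh k)
      = w k / (s - x k) + w k * σ k / (s - x k) := by
    intro k
    have h1 : (s - x k) / (th - xh k) = 1 + ν k := by rw [hν k]; ring
    have hwhk : w k = wh k * (1 + ζ k) := by
      rw [h1ζ k, mul_comm]; exact (div_mul_cancel₀ (w k) (hwh k)).symm
    have hinv : (1:ℝ) / (th - xh k) = (1 + ν k) / (s - x k) := by
      rw [← h1, div_div, mul_comm (th - xh k), ← div_div, div_self (hsx k)]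
    have hc : wh k * (1 + ζ k) * ((ν k - ζ k) / (1 + ζ k))
        = wh k * (ν k - ζ k) := by
      rw [mul_assoc, mul_div_assoc', mul_comm (1 + ζ k), mul_div_assoc,
        div_self (h1ζne k), mul_one]
    rw [hσ k, hwhk, hc, ← add_div]
    have hnum2 : wh k * (1 + ζ k) + wh k * (ν k - ζ k) = wh k * (1 + ν k) := by
      ring
    rw [hnum2, mul_div_assoc, ← hinv, mul_one_div]
  have hDE : D * E = ∑ k, w k * σ k / (s - x k) := by
    rw [hE]; field_simp
  have hfirst : (∑ k, wh k / (th - xh k)) = D * (1 + E) := by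
    calc (∑ k, wh k / (th - xh k))
        = ∑ k, (w k / (s - x k) + w k * σ k / (s - x k)) :=
          Finset.sum_congr rfl fun k _ => hterm k
      _ = (∑ k, w k / (s - x k)) + ∑ k, w k * σ k / (s - x k) :=
          Finset.sum_add_distrib
      _ = D + D * E := by rw [← hD, hDE]
      _ = D * (1 + E) := by ring
  -- |E| bound
  have hEbary : E = bary x w σ s := by
    rw [bary, dif_neg hnex, hE, one_div_mul_eq_div, hD]
  have hsecond : |E| ≤ Λ * (d + supNorm ζ) / (1 - supNorm ζ) := by
    by_cases hσ0 : σ = 0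
    · have hE0 : E = 0 := by
        rw [hE, hσ0]; simp
      rw [hE0, abs_zero]
      exact div_nonneg (mul_nonneg hΛ0.le (by linarith)) h1ζpos.le
    · obtain ⟨k0, hk0⟩ := Function.ne_iff.mp hσ0
      have hσpos : 0 < supNorm σ :=
        lt_of_lt_of_le (abs_pos.mpr (by simpa using hk0))
          (Finset.le_sup' (fun k => |σ k|) (Finset.mem_univ k0))
      have hmem : |bary x w σ s| / supNorm σ ∈ lebesgueSet x w xm xp :=
        ⟨s, hs, σ, hσ0, rfl⟩
      have hle : |bary x w σ s| / supNorm σ ≤ Λ := hΛ.1 hmem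
      have hEle : |E| ≤ Λ * supNorm σ := by
        rw [hEbary]
        exact (div_le_iff₀ hσpos).mp hle
      have hσle : supNorm σ ≤ (d + supNorm ζ) / (1 - supNorm ζ) := by
        apply Finset.sup'_le
        intro k _
        have habs : 1 - supNorm ζ ≤ |1 + ζ k| := by
          have h := abs_add_le (1 + ζ k) (-ζ k)
          simp only [add_neg_cancel_right, abs_neg, abs_one] at h
          have := hζle k
          linarith
        have hnumer : |ν k - ζ k| ≤ d + supNorm ζ := by
          have h := abs_sub (ν k) (ζ k)
          have := hd1 k
          have := hζle k
          calc |ν k - ζ k| ≤ |ν k| + |ζ k| := abs_sub _ _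
            _ ≤ d + supNorm ζ := by linarith [hd1 k, hζle k]
        rw [hσ k, abs_div]
        exact div_le_div₀ (by linarith) hnumer h1ζpos habs
      calc |E| ≤ Λ * supNorm σ := hEle
        _ ≤ Λ * ((d + supNorm ζ) / (1 - supNorm ζ)) :=
            mul_le_mul_of_nonneg_left hσle hΛ0.le
        _ = Λ * (d + supNorm ζ) / (1 - supNorm ζ) := by rw [mul_div_assoc]
  exact ⟨hfirst, hsecond, hthird⟩
end

section
/- Assume: nodes x_0 < … < x_n with nonzero weights w_0, …, w_n and an interval [x⁻, x⁺] on which Σ_{k=0}^n w_k/(t − x_k) ≠ 0 for all t outside the nodes, with finite Lebesgue constant Λ := Λ_{x⁻,x⁺,x,w}; perturbed nodes x̂_0, …, x̂_n, nonzero perturbed weights ŵ_0, …, ŵ_n and a perturbed interval [x̂⁻, x̂⁺] satisfying the interlacing conditions, with k⁻ the smallest k such that x_k > x⁻ and k⁺ the largest k such that x_k < x⁺ and k⁺ ≥ k⁻. Let ε > 0 with (2n + 5)ε < 1, set ζ_k := (w_k − ŵ_k)/ŵ_k, Z := (max_k |ζ_k| + (n + 2)ε)/(1 − (n + 2)ε),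 let δ be the node perturbation measure, and assume (δ + Z)Λ + Z < 1. Let x̂ ∈ [x̂⁻, x̂⁺], and let y, y', w' ∈ ℝ^{n+1} be such that w'_k = ŵ_k·u_k with u_k > 0 and |u_k − 1| ≤ (n + 2)ε/(1 − (n + 2)ε), and y'_k = y_k(1 + ν_k) with |ν_k| ≤ (2n + 5)ε/(1 − (2n + 5)ε). Then there exist x ∈ [x⁻, x⁺] with |x − x̂| ≤ max{ max_k |x_k − x̂_k|, |x̂⁻ − x⁻|, |x̂⁺ − x⁺| } and α ∈ ℝ^{n+1} with ‖α‖_∞ ≤ (1 + Λ)(δ + Z)/(1 − Z − (δ + Z)Λ) such that I_{x̂,w'}(y')(x̂) = I_{x,w}(ỹ)(x), where ỹ_k := y_k(1 + α_k)(1 + ν_k). -/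

private lemma bs_mediant (d dL dR lam AL BL AR BR : ℝ) (hlam0 : 0 ≤ lam) (hlam1 : lam ≤ 1)
    (hALr : AL = (1 + dL) * BL) (hARr : AR = (1 + dR) * BR)
    (hdL : |dL| ≤ d) (hdR : |dR| ≤ d)
    (hsign : (0 ≤ BL ∧ 0 ≤ BR) ∨ (BL ≤ 0 ∧ BR ≤ 0))
    (hD : (1 - lam) * BL + lam * BR ≠ 0) :
    |((1 - lam) * AL + lam * AR) / ((1 - lam) * BL + lam * BR) - 1| ≤ d := by
  have hd0 : 0 ≤ d := (abs_nonneg _).trans hdL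
  have hlam1' : 0 ≤ 1 - lam := by linarith
  have habs : (1 - lam) * |BL| + lam * |BR| = |(1 - lam) * BL + lam * BR| := by
    rcases hsign with ⟨h1, h2⟩ | ⟨h1, h2⟩
    · rw [abs_of_nonneg h1, abs_of_nonneg h2,
        abs_of_nonneg (add_nonneg (mul_nonneg hlam1' h1) (mul_nonneg hlam0 h2))]
    · rw [abs_of_nonpos h1, abs_of_nonpos h2,
        abs_of_nonpos (add_nonpos (mul_nonpos_of_nonneg_of_nonpos hlam1' h1)
          (mul_nonpos_of_nonneg_of_nonpos hlam0 h2))]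
      ring
  have hnum : |((1 - lam) * AL + lam * AR) - ((1 - lam) * BL + lam * BR)|
      ≤ d * |(1 - lam) * BL + lam * BR| := by
    have he : ((1 - lam) * AL + lam * AR) - ((1 - lam) * BL + lam * BR)
        = (1 - lam) * (dL * BL) + lam * (dR * BR) := by rw [hALr, hARr]; ring
    rw [he]
    calc |(1 - lam) * (dL * BL) + lam * (dR * BR)|
        ≤ |(1 - lam) * (dL * BL)| + |lam * (dR * BR)| := abs_add_le _ _
      _ = (1 - lam) * (|dL| * |BL|) + lam * (|dR| * |BR|) := by
          rw [abs_mul, abs_mul, abs_mul, abs_mul, abs_of_nonneg hlam1', abs_of_nonneg hlam0]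
      _ ≤ (1 - lam) * (d * |BL|) + lam * (d * |BR|) := by
          exact add_le_add
            (mul_le_mul_of_nonneg_left (mul_le_mul_of_nonneg_right hdL (abs_nonneg _)) hlam1')
            (mul_le_mul_of_nonneg_left (mul_le_mul_of_nonneg_right hdR (abs_nonneg _)) hlam0)
      _ = d * ((1 - lam) * |BL| + lam * |BR|) := by ring
      _ = d * |(1 - lam) * BL + lam * BR| := by rw [habs]
  have h1 : ((1 - lam) * AL + lam * AR) / ((1 - lam) * BL + lam * BR) - 1
      = (((1 - lam) * AL + lam * AR) - ((1 - lam) * BL + lam * BR)) / ((1 - lam) * BL + lam * BR) := by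
    field_simp
  rw [h1, abs_div, div_le_iff₀ (abs_pos.mpr hD)]
  exact hnum

private lemma bs_key2 (a s PZ : ℝ) (ha : 0 < a) (h1a : 0 < 1 - a) (h1s : 0 < 1 - s)
    (hs0 : 0 ≤ s) (e3 : PZ * ((1 - a) * (1 - s) * (1 - a)) = 1 - 2 * a - s) : PZ ≤ 1 := by
  nlinarith [e3, mul_pos (mul_pos h1a h1s) h1a, mul_nonneg (mul_nonneg ha.le ha.le) h1s.le,
    mul_nonneg ha.le hs0]

set_option maxHeartbeats 1000000 in
/-- **exact-arithmetic core of the paper's main Theorem 2.1.**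
Under the interlacing conditions, with `Z := (‖ζ‖_∞ + (n+2)ε)/(1 − (n+2)ε)`,
`δ` the node perturbation measure and `(δ + Z)Λ + Z < 1`, if
`w'_k = ŵ_k u_k` with `u_k > 0`, `|u_k − 1| ≤ (n+2)ε/(1 − (n+2)ε)` and
`y'_k = y_k(1 + ν_k)` with `|ν_k| ≤ (2n+5)ε/(1 − (2n+5)ε)`, then for every
`x̂ ∈ [x̂⁻, x̂⁺]` there exist `x ∈ [x⁻, x⁺]` with
`|x − x̂| ≤ max{max_k |x_k − x̂_k|, |x̂⁻ − x⁻|, |x̂⁺ − x⁺|}` and `α` with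
`‖α‖_∞ ≤ (1 + Λ)(δ + Z)/(1 − Z − (δ + Z)Λ)` such that
`I_{x̂,w'}(y')(x̂) = I_{x,w}(ỹ)(x)` where `ỹ_k = y_k(1 + α_k)(1 + ν_k)`. -/
theorem backward_stability_main
    (n : ℕ) (x w xh wh : Fin (n + 1) → ℝ) (xm xp xhm xhp : ℝ)
    (hx : StrictMono x)
    (hw : ∀ k, w k ≠ 0) (hwh : ∀ k, wh k ≠ 0)
    (hden : ∀ t ∈ Set.Icc xm xp, (∀ k, t ≠ x k) → (∑ k, w k / (t - x k)) ≠ 0)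
    (Λ : ℝ) (hΛ : IsLUB (lebesgueSet x w xm xp) Λ)
    -- interlacing conditions
    (hio : ∀ k, (xm < x k ∧ x k < xp) ↔ (xhm < xh k ∧ xh k < xhp))
    (him : ∀ k, x k = xm ↔ xh k = xhm)
    (hip : ∀ k, x k = xp ↔ xh k = xhp)
    -- k⁻ and k⁺
    (km kp : Fin (n + 1))
    (hkm1 : xm < x km) (hkm2 : ∀ k, xm < x k → km ≤ k)
    (hkp1 : x kp < xp) (hkp2 : ∀ k, x k < xp → k ≤ kp)
    (hkmkp : km ≤ kp)
    -- machine precision and the aggregate relative weight error `Z`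
    (ε : ℝ) (hε : 0 < ε) (hεn : (2 * (n : ℝ) + 5) * ε < 1)
    (ζ : Fin (n + 1) → ℝ) (hζ : ∀ k, ζ k = (w k - wh k) / wh k)
    (Z : ℝ) (hZ : Z = (supNorm ζ + ((n : ℝ) + 2) * ε) / (1 - ((n : ℝ) + 2) * ε))
    -- the node perturbation measure `δ`
    (δ : Fin (n + 1) → Fin (n + 1) → ℝ)
    (hδ : ∀ j k, δ j k = if j = k then 0 else (x j - x k) / (xh j - xh k) - 1)
    (δm δp : Fin (n + 1) → ℝ)
    (hδm : ∀ j, δm j = if xhm = xh j then 0 else (xm - x j) / (xhm - xh j) - 1)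
    (hδp : ∀ j, δp j = if xhp = xh j then 0 else (xp - x j) / (xhp - xh j) - 1)
    (dmax : ℝ)
    (hdmax : dmax = Finset.univ.sup' Finset.univ_nonempty
      (fun p : Fin (n + 1) × Fin (n + 1) =>
        max |δm p.1| (max |δ p.1 p.2| |δp p.1|)))
    (hmain : (dmax + Z) * Λ + Z < 1)
    -- the evaluation point and the perturbed weights and data
    (th : ℝ) (hth : th ∈ Set.Icc xhm xhp)
    (y y' w' : Fin (n + 1) → ℝ)
    (u : Fin (n + 1) → ℝ)
    (hu : ∀ k, w' k = wh k * u k) (hupos : ∀ k, 0 < u k)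
    (hub : ∀ k, |u k - 1| ≤ ((n : ℝ) + 2) * ε / (1 - ((n : ℝ) + 2) * ε))
    (ν : Fin (n + 1) → ℝ)
    (hy' : ∀ k, y' k = y k * (1 + ν k))
    (hνb : ∀ k, |ν k| ≤ (2 * (n : ℝ) + 5) * ε / (1 - (2 * (n : ℝ) + 5) * ε)) :
    ∃ t ∈ Set.Icc xm xp, ∃ α : Fin (n + 1) → ℝ,
      |t - th| ≤ max (supNorm (fun k => x k - xh k)) (max |xhm - xm| |xhp - xp|) ∧
      supNorm α ≤ (1 + Λ) * (dmax + Z) / (1 - Z - (dmax + Z) * Λ) ∧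
      bary xh w' y' th = bary x w (fun k => y k * (1 + α k) * (1 + ν k)) t := by
    classical
  set M := max (supNorm (fun k => x k - xh k)) (max |xhm - xm| |xhp - xp|) with hM
  clear_value M
  -- basic positivity facts
  have hn0 : (0:ℝ) ≤ (n : ℝ) := Nat.cast_nonneg n
  have hεa : 0 < ((n : ℝ) + 2) * ε := by positivity
  have ha1 : ((n : ℝ) + 2) * ε < 1 := by nlinarith [hεn, hε.le, hn0]
  have h1a : 0 < 1 - ((n : ℝ) + 2) * ε := by linarith only [ha1]
  -- Λ ≥ 1
  have hxkmxp : x km < xp := lt_of_le_of_lt (hx.monotone hkmkp) hkp1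
  have hxkm_mem : x km ∈ Set.Icc xm xp := ⟨hkm1.le, hxkmxp.le⟩
  have hΛ1 : 1 ≤ Λ := by
    have hmem : (1 : ℝ) ∈ lebesgueSet x w xm xp := by
      refine ⟨x km, hxkm_mem, fun _ => 1, ?_, ?_⟩
      · intro hcon
        have := congrFun hcon km
        simp at this
      · have hexx : ∃ k, x km = x k := ⟨km, rfl⟩
        have hb : bary x w (fun _ => (1 : ℝ)) (x km) = 1 := by
          unfold bary; rw [dif_pos hexx]
        have hs : supNorm (fun _ : Fin (n + 1) => (1 : ℝ)) = 1 := by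
          unfold supNorm; simp
        rw [hb, hs]
        norm_num
    exact hΛ.1 hmem
  have hΛ0 : 0 ≤ Λ := by linarith only [hΛ1]
  -- bounds from dmax
  have hdb : ∀ j k, |δ j k| ≤ dmax := by
    intro j k
    have h1 : max |δm j| (max |δ j k| |δp j|) ≤ dmax := by
      rw [hdmax]
      exact Finset.le_sup' (fun p : Fin (n + 1) × Fin (n + 1) =>
        max |δm p.1| (max |δ p.1 p.2| |δp p.1|)) (Finset.mem_univ ((j, k) : Fin (n + 1) × Fin (n + 1)))
    exact le_trans (le_trans (le_max_left _ _) (le_max_right _ _)) h1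
  have hdbm : ∀ j, |δm j| ≤ dmax := by
    intro j
    have h1 : max |δm j| (max |δ j j| |δp j|) ≤ dmax := by
      rw [hdmax]
      exact Finset.le_sup' (fun p : Fin (n + 1) × Fin (n + 1) =>
        max |δm p.1| (max |δ p.1 p.2| |δp p.1|)) (Finset.mem_univ ((j, j) : Fin (n + 1) × Fin (n + 1)))
    exact le_trans (le_max_left _ _) h1
  have hdbp : ∀ j, |δp j| ≤ dmax := by
    intro j
    have h1 : max |δm j| (max |δ j j| |δp j|) ≤ dmax := by
      rw [hdmax]
      exact Finset.le_sup' (fun p : Fin (n + 1) × Fin (n + 1) =>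
        max |δm p.1| (max |δ p.1 p.2| |δp p.1|)) (Finset.mem_univ ((j, j) : Fin (n + 1) × Fin (n + 1)))
    exact le_trans (le_trans (le_max_right _ _) (le_max_right _ _)) h1
  have hd0 : 0 ≤ dmax := le_trans (abs_nonneg _) (hdb 0 0)
  have hζb : ∀ k, |ζ k| ≤ supNorm ζ := by
    intro k
    unfold supNorm
    exact Finset.le_sup' (fun k => |ζ k|) (Finset.mem_univ k)
  have hs0 : 0 ≤ supNorm ζ := le_trans (abs_nonneg _) (hζb 0)
  have hZ0 : 0 ≤ Z := by rw [hZ]; exact div_nonneg (add_nonneg hs0 hεa.le) h1a.le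
  have hZΛ : 0 ≤ (dmax + Z) * Λ := mul_nonneg (add_nonneg hd0 hZ0) hΛ0
  have hZ1 : Z < 1 := by linarith only [hmain, hZΛ]
  have h1Z : 0 < 1 - Z := by linarith only [hZ1]
  have hd1 : dmax < 1 := by
    have h1 : (dmax + Z) * 1 ≤ (dmax + Z) * Λ :=
      mul_le_mul_of_nonneg_left hΛ1 (add_nonneg hd0 hZ0)
    linarith only [h1, hmain, hZ0]
  have hden2 : 0 < 1 - Z - (dmax + Z) * Λ := by linarith only [hmain]
  have hT0 : 0 ≤ (1 + Λ) * (dmax + Z) / (1 - Z - (dmax + Z) * Λ) :=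
    div_nonneg (mul_nonneg (by linarith only [hΛ0]) (add_nonneg hd0 hZ0)) hden2.le
  -- 1 + δ's positive
  have h1δ : ∀ j k, 0 < 1 + δ j k := by
    intro j k; have := abs_le.mp (hdb j k); linarith only [this.1, hd1]
  have h1δm : ∀ j, 0 < 1 + δm j := by
    intro j; have := abs_le.mp (hdbm j); linarith only [this.1, hd1]
  have h1δp : ∀ j, 0 < 1 + δp j := by
    intro j; have := abs_le.mp (hdbp j); linarith only [this.1, hd1]
  -- injectivity of xh
  have hxh_inj : ∀ j k, j ≠ k → xh j ≠ xh k := by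
    intro j k hjk heq
    have h1 := hδ j k
    rw [if_neg hjk, heq, sub_self, div_zero] at h1
    have h2 := hdb j k
    rw [h1] at h2
    norm_num at h2
    linarith only [h2, hd1]
  -- relation lemmas
  have hrelN : ∀ j k, x j - x k = (1 + δ j k) * (xh j - xh k) := by
    intro j k
    by_cases hjk : j = k
    · subst hjk; simp
    · have hne : xh j - xh k ≠ 0 := sub_ne_zero.mpr (hxh_inj j k hjk)
      rw [hδ j k, if_neg hjk]
      have h2 : 1 + ((x j - x k) / (xh j - xh k) - 1) = (x j - x k) / (xh j - xh k) := by ring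
      rw [h2, div_mul_cancel₀ _ hne]
  have hrelM : ∀ k, xm - x k = (1 + δm k) * (xhm - xh k) := by
    intro k
    by_cases hk : xhm = xh k
    · have hxe : x k = xm := (him k).mpr hk.symm
      rw [hxe, ← hk]
      ring
    · have hne : xhm - xh k ≠ 0 := sub_ne_zero.mpr hk
      rw [hδm k, if_neg hk]
      have h2 : 1 + ((xm - x k) / (xhm - xh k) - 1) = (xm - x k) / (xhm - xh k) := by ring
      rw [h2, div_mul_cancel₀ _ hne]
  have hrelP : ∀ k, xp - x k = (1 + δp k) * (xhp - xh k) := by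
    intro k
    by_cases hk : xhp = xh k
    · have hxe : x k = xp := (hip k).mpr hk.symm
      rw [hxe, ← hk]
      ring
    · have hne : xhp - xh k ≠ 0 := sub_ne_zero.mpr hk
      rw [hδp k, if_neg hk]
      have h2 : 1 + ((xp - x k) / (xhp - xh k) - 1) = (xp - x k) / (xhp - xh k) := by ring
      rw [h2, div_mul_cancel₀ _ hne]
  -- order transfer
  have hmono : ∀ j k : Fin (n + 1), x j < x k → xh j < xh k := by
    intro j k hjk
    by_contra hcon
    push_neg at hcon
    have h1 := hrelN j k
    have h2 := mul_nonneg (h1δ j k).le (sub_nonneg.mpr hcon)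
    linarith only [h1, h2, hjk]
  have hmonoM1 : ∀ k, x k < xm → xh k < xhm := by
    intro k h
    by_contra hcon
    push_neg at hcon
    have h1 := hrelM k
    have h2 := mul_nonpos_of_nonneg_of_nonpos (h1δm k).le (sub_nonpos.mpr hcon)
    linarith only [h1, h2, h]
  have hmonoM2 : ∀ k, xm < x k → xhm < xh k := by
    intro k h
    by_contra hcon
    push_neg at hcon
    have h1 := hrelM k
    have h2 := mul_nonneg (h1δm k).le (sub_nonneg.mpr hcon)
    linarith only [h1, h2, h]
  have hmonoP1 : ∀ k, xp < x k → xhp < xh k := by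
    intro k h
    by_contra hcon
    push_neg at hcon
    have h1 := hrelP k
    have h2 := mul_nonneg (h1δp k).le (sub_nonneg.mpr hcon)
    linarith only [h1, h2, h]
  have hmonoP2 : ∀ k, x k < xp → xh k < xhp := by
    intro k h
    by_contra hcon
    push_neg at hcon
    have h1 := hrelP k
    have h2 := mul_nonpos_of_nonneg_of_nonpos (h1δp k).le (sub_nonpos.mpr hcon)
    linarith only [h1, h2, h]
  -- the Lebesgue-constant bound
  have hleb : ∀ (v : Fin (n + 1) → ℝ) (s : ℝ), s ∈ Set.Icc xm xp →
      |bary x w v s| ≤ Λ * supNorm v := by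
    intro v s hs
    by_cases hv : v = 0
    · subst hv
      have hb : bary x w 0 s = 0 := by
        unfold bary
        split_ifs with hexx
        · simp
        · simp
      have hsup : supNorm (0 : Fin (n + 1) → ℝ) = 0 := by unfold supNorm; simp
      rw [hb, hsup]
      simp
    · have hvpos : 0 < supNorm v := by
        rcases Function.ne_iff.mp hv with ⟨k, hk⟩
        have h1 : |v k| ≤ supNorm v := by
          unfold supNorm; exact Finset.le_sup' (fun k => |v k|) (Finset.mem_univ k)
        have h2 : 0 < |v k| := abs_pos.mpr hk
        linarith only [h1, h2]
      have hmem : |bary x w v s| / supNorm v ∈ lebesgueSet x w xm xp := ⟨s, hs, v, hv, rfl⟩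
      have h3 := hΛ.1 hmem
      calc |bary x w v s| = (|bary x w v s| / supNorm v) * supNorm v := by
            field_simp
        _ ≤ Λ * supNorm v := mul_le_mul_of_nonneg_right h3 hvpos.le
  -- M bounds
  have hsupx : ∀ k, |x k - xh k| ≤ M := by
    intro k
    rw [hM]
    refine le_trans ?_ (le_max_left _ _)
    unfold supNorm
    exact Finset.le_sup' (fun k : Fin (n + 1) => |x k - xh k|) (Finset.mem_univ k)
  have hMm : |xm - xhm| ≤ M := by
    rw [hM, abs_sub_comm]
    exact le_trans (le_max_left _ _) (le_max_right _ _)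
  have hMp : |xp - xhp| ≤ M := by
    rw [hM, abs_sub_comm]
    exact le_trans (le_max_right _ _) (le_max_right _ _)
  by_cases hex : ∃ k, th = xh k
  · -- `th` is a perturbed node
    set c := hex.choose with hc
    have hcs : th = xh c := hex.choose_spec
    have hLHS : bary xh w' y' th = y' c := by unfold bary; rw [dif_pos hex]
    refine ⟨x c, ⟨⟨?_, ?_⟩, fun _ => 0, ?_, ?_, ?_⟩⟩
    · by_contra hcon
      push_neg at hcon
      have h1 := hmonoM1 c hcon
      rw [← hcs] at h1
      linarith only [h1, hth.1]
    · by_contra hcon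
      push_neg at hcon
      have h1 := hmonoP1 c hcon
      rw [← hcs] at h1
      linarith only [h1, hth.2]
    · rw [hcs]; exact hsupx c
    · have hz : supNorm (fun _ : Fin (n + 1) => (0 : ℝ)) = 0 := by
        unfold supNorm; simp
      rw [hz]; exact hT0
    · have hex2 : ∃ k, x c = x k := ⟨c, rfl⟩
      have hcc : hex2.choose = c := (hx.injective hex2.choose_spec).symm
      rw [hLHS]
      unfold bary
      rw [dif_pos hex2]
      simp only []
      rw [hcc, hy' c]
      ring
  · push_neg at hex
    -- master construction on a bracket [Ph, Qh] ∋ th with image [P, Q]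
    have master : ∀ (P Ph Q Qh : ℝ) (δL δR : Fin (n + 1) → ℝ),
        xm ≤ P → Q ≤ xp → P ≤ Q → Ph < Qh → Ph ≤ th → th ≤ Qh →
        (∀ k, xh k ≤ Ph ∨ Qh ≤ xh k) →
        (∀ k, P - x k = (1 + δL k) * (Ph - xh k)) → (∀ k, |δL k| ≤ dmax) →
        (∀ k, Q - x k = (1 + δR k) * (Qh - xh k)) → (∀ k, |δR k| ≤ dmax) →
        |P - Ph| ≤ M → |Q - Qh| ≤ M →
        ∃ t ∈ Set.Icc xm xp, ∃ α : Fin (n + 1) → ℝ,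
          |t - th| ≤ M ∧
          supNorm α ≤ (1 + Λ) * (dmax + Z) / (1 - Z - (dmax + Z) * Λ) ∧
          bary xh w' y' th = bary x w (fun k => y k * (1 + α k) * (1 + ν k)) t := by
      intro P Ph Q Qh δL δR hP hQ hPQ hPhQh hthL hthR hsign hLrel hLb hRrel hRb hMP hMQ
      have hQhPh : 0 < Qh - Ph := by linarith only [hPhQh]
      set lam := (th - Ph) / (Qh - Ph) with hlam
      have hlam0 : 0 ≤ lam := div_nonneg (by linarith only [hthL]) hQhPh.le
      have hlam1 : lam ≤ 1 := by
        rw [hlam, div_le_one hQhPh]; linarith only [hthR]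
      have hlam1' : (0:ℝ) ≤ 1 - lam := by linarith only [hlam1]
      have hlamQP : lam * (Qh - Ph) = th - Ph := div_mul_cancel₀ _ hQhPh.ne'
      clear_value lam
      set t := (1 - lam) * P + lam * Q with ht
      clear_value t
      have hth_eq : th = (1 - lam) * Ph + lam * Qh := by linear_combination -hlamQP
      have htmem : t ∈ Set.Icc xm xp := by
        constructor
        · have h1 := mul_nonneg hlam0 (sub_nonneg.mpr hPQ)
          linarith only [ht, hP, h1]
        · have h1 := mul_nonneg hlam1' (sub_nonneg.mpr hPQ)
          linarith only [ht, hQ, h1]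
      have habs_t : |t - th| ≤ M := by
        have h1 : t - th = (1 - lam) * (P - Ph) + lam * (Q - Qh) := by
          rw [ht, hth_eq]; ring
        have h2 : |t - th| ≤ (1 - lam) * |P - Ph| + lam * |Q - Qh| := by
          rw [h1]
          refine (abs_add_le _ _).trans ?_
          rw [abs_mul, abs_mul, abs_of_nonneg hlam0, abs_of_nonneg hlam1']
        have p1 := mul_le_mul_of_nonneg_left hMP hlam1'
        have p2 := mul_le_mul_of_nonneg_left hMQ hlam0
        linarith only [h2, p1, p2]
      have hρ : ∀ k, |(t - x k) / (th - xh k) - 1| ≤ dmax := by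
        intro k
        have hBk : th - xh k ≠ 0 := sub_ne_zero.mpr (hex k)
        have hNum : t - x k = (1 - lam) * (P - x k) + lam * (Q - x k) := by
          rw [ht]; ring
        have hDen : th - xh k = (1 - lam) * (Ph - xh k) + lam * (Qh - xh k) := by
          rw [hth_eq]; ring
        rw [hNum, hDen]
        refine bs_mediant dmax (δL k) (δR k) lam _ _ _ _ hlam0 hlam1 (hLrel k) (hRrel k)
          (hLb k) (hRb k) ?_ ?_
        · rcases hsign k with h | h
          · exact Or.inl ⟨by linarith only [h], by linarith only [h, hPhQh]⟩
          · exact Or.inr ⟨by linarith only [h, hPhQh], by linarith only [h]⟩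
        · rw [← hDen]; exact hBk
      have htnode : ∀ k, t ≠ x k := by
        intro k hk
        have h1 := hρ k
        have h0 : t - x k = 0 := sub_eq_zero.mpr hk
        rw [h0, zero_div] at h1
        norm_num at h1
        linarith only [h1, hd1]
      -- weight perturbation bound
      have hs1 : supNorm ζ + ((n : ℝ) + 2) * ε < 1 - ((n : ℝ) + 2) * ε := by
        have h1 : Z < 1 := hZ1
        rw [hZ, div_lt_one h1a] at h1
        linarith only [h1]
      have h1s : 0 < 1 - supNorm ζ := by linarith only [hs1, hεa]
      have h1ζ : ∀ k, 0 < 1 + ζ k := by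
        intro k
        have h1 := abs_le.mp (hζb k)
        linarith only [h1.1, hs1, hεa]
      set W := (((n : ℝ) + 2) * ε / (1 - ((n : ℝ) + 2) * ε) + supNorm ζ) / (1 - supNorm ζ)
        with hWdef
      have hW0 : 0 ≤ W := div_nonneg (add_nonneg (div_nonneg hεa.le h1a.le) hs0) h1s.le
      clear_value W
      have hWb : ∀ k, |u k / (1 + ζ k) - 1| ≤ W := by
        intro k
        have hpos := h1ζ k
        have h1 : u k / (1 + ζ k) - 1 = (u k - 1 - ζ k) / (1 + ζ k) := by
          field_simp
          ring
        rw [h1, abs_div, abs_of_pos hpos, div_le_iff₀ hpos]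
        have h2 : |u k - 1 - ζ k| ≤ ((n : ℝ) + 2) * ε / (1 - ((n : ℝ) + 2) * ε) + supNorm ζ := by
          have h3 : u k - 1 - ζ k = (u k - 1) + -(ζ k) := by ring
          rw [h3]
          refine (abs_add_le _ _).trans ?_
          rw [abs_neg]
          exact add_le_add (hub k) (hζb k)
        have h4 : W * (1 - supNorm ζ)
            = ((n : ℝ) + 2) * ε / (1 - ((n : ℝ) + 2) * ε) + supNorm ζ := by
          rw [hWdef]
          exact div_mul_cancel₀ _ h1s.ne'
        have h5 := (abs_le.mp (hζb k)).1
        have h6 : W * (1 - supNorm ζ) ≤ W * (1 + ζ k) :=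
          mul_le_mul_of_nonneg_left (by linarith only [h5]) hW0
        linarith only [h2, h4, h6]
      set η : Fin (n + 1) → ℝ :=
        fun k => (u k / (1 + ζ k)) * ((t - x k) / (th - xh k)) - 1 with hηdef
      clear_value η
      have hηeq : ∀ k, η k = (u k / (1 + ζ k)) * ((t - x k) / (th - xh k)) - 1 :=
        fun k => congrFun hηdef k
      have hkey2 : (1 + W) * (1 - Z) ≤ 1 := by
        have e1 : (1 + W) * ((1 - ((n : ℝ) + 2) * ε) * (1 - supNorm ζ)) = 1 := by
          rw [hWdef]
          field_simp
          ring
        have e2 : (1 - Z) * (1 - ((n : ℝ) + 2) * ε)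
            = 1 - 2 * (((n : ℝ) + 2) * ε) - supNorm ζ := by
          rw [hZ]
          field_simp
          ring
        have e3 : ((1 + W) * (1 - Z))
            * ((1 - ((n : ℝ) + 2) * ε) * (1 - supNorm ζ) * (1 - ((n : ℝ) + 2) * ε))
            = 1 - 2 * (((n : ℝ) + 2) * ε) - supNorm ζ := by
          calc ((1 + W) * (1 - Z))
              * ((1 - ((n : ℝ) + 2) * ε) * (1 - supNorm ζ) * (1 - ((n : ℝ) + 2) * ε))
              = ((1 + W) * ((1 - ((n : ℝ) + 2) * ε) * (1 - supNorm ζ)))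
                * ((1 - Z) * (1 - ((n : ℝ) + 2) * ε)) := by ring
            _ = 1 * (1 - 2 * (((n : ℝ) + 2) * ε) - supNorm ζ) := by rw [e1, e2]
            _ = 1 - 2 * (((n : ℝ) + 2) * ε) - supNorm ζ := one_mul _
        exact bs_key2 (((n : ℝ) + 2) * ε) (supNorm ζ) ((1 + W) * (1 - Z)) hεa h1a h1s hs0 e3
      have hηb : ∀ k, |η k| ≤ (dmax + Z) / (1 - Z) := by
        intro k
        have hA := hWb k
        have hBabs : |(t - x k) / (th - xh k)| ≤ 1 + dmax := by
          have h := abs_add_le ((t - x k) / (th - xh k) - 1) 1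
          have h2 : (t - x k) / (th - xh k) - 1 + 1 = (t - x k) / (th - xh k) := by ring
          rw [h2, abs_one] at h
          linarith only [h, hρ k]
        have hstep1 : |η k| ≤ W * (1 + dmax) + dmax := by
          have he : η k = (u k / (1 + ζ k) - 1) * ((t - x k) / (th - xh k))
              + ((t - x k) / (th - xh k) - 1) := by
            rw [hηeq k]; ring
          rw [he]
          refine (abs_add_le _ _).trans ?_
          rw [abs_mul]
          have h7 := mul_le_mul hA hBabs (abs_nonneg _) hW0
          linarith only [h7, hρ k]
        have hstep2 : W * (1 + dmax) + dmax ≤ (dmax + Z) / (1 - Z) := by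
          rw [le_div_iff₀ h1Z]
          have h8 := mul_le_mul_of_nonneg_left hkey2 (by linarith only [hd0] : (0:ℝ) ≤ 1 + dmax)
          linarith only [h8]
        linarith only [hstep1, hstep2]
      set ee := bary x w η t with heedef
      clear_value ee
      have heeb : |ee| ≤ Λ * ((dmax + Z) / (1 - Z)) := by
        rw [heedef]
        refine (hleb η t htmem).trans ?_
        have hsup : supNorm η ≤ (dmax + Z) / (1 - Z) := by
          unfold supNorm
          exact Finset.sup'_le _ _ (fun k _ => hηb k)
        exact mul_le_mul_of_nonneg_left hsup hΛ0
      have heel : Λ * ((dmax + Z) / (1 - Z)) < 1 := by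
        rw [show Λ * ((dmax + Z) / (1 - Z)) = (dmax + Z) * Λ / (1 - Z) by ring,
          div_lt_one h1Z]
        linarith only [hmain]
      have hee1 : 0 < 1 + ee := by
        have h1 := neg_abs_le ee
        linarith only [h1, heeb, heel]
      set α : Fin (n + 1) → ℝ := fun k => (η k - ee) / (1 + ee) with hαdef
      clear_value α
      have hαval : ∀ k, α k = (η k - ee) / (1 + ee) := fun k => congrFun hαdef k
      have hT1 : ((1 + Λ) * (dmax + Z) / (1 - Z - (dmax + Z) * Λ))
          * (1 - Λ * ((dmax + Z) / (1 - Z)))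
          = (dmax + Z) / (1 - Z) + Λ * ((dmax + Z) / (1 - Z)) := by
        rw [div_mul_eq_mul_div, div_eq_iff hden2.ne']
        have hA : (dmax + Z) / (1 - Z) * (1 - Z) = dmax + Z := div_mul_cancel₀ _ h1Z.ne'
        linear_combination -(1 + Λ) * hA
      have hαb : ∀ k, |α k| ≤ (1 + Λ) * (dmax + Z) / (1 - Z - (dmax + Z) * Λ) := by
        intro k
        rw [hαval k, abs_div, abs_of_pos hee1, div_le_iff₀ hee1]
        have h1 : |η k - ee| ≤ (dmax + Z) / (1 - Z) + Λ * ((dmax + Z) / (1 - Z)) := by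
          have h2 : η k - ee = η k + -ee := by ring
          rw [h2]
          refine (abs_add_le _ _).trans ?_
          rw [abs_neg]
          exact add_le_add (hηb k) heeb
        have h3 : 1 - Λ * ((dmax + Z) / (1 - Z)) ≤ 1 + ee := by
          have h5 := neg_abs_le ee
          linarith only [h5, heeb]
        have h4 := mul_le_mul_of_nonneg_left h3 hT0
        linarith only [h1, h4, hT1]
      have hαsup : supNorm α ≤ (1 + Λ) * (dmax + Z) / (1 - Z - (dmax + Z) * Λ) := by
        unfold supNorm
        exact Finset.sup'_le _ _ (fun k _ => hαb k)
      refine ⟨t, htmem, α, habs_t, hαsup, ?_⟩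
      have hbq : ∀ k, th - xh k ≠ 0 := fun k => sub_ne_zero.mpr (hex k)
      have htx : ∀ k, t - x k ≠ 0 := fun k => sub_ne_zero.mpr (htnode k)
      have hwrel : ∀ k, w k = wh k * (1 + ζ k) := by
        intro k
        rw [hζ k]
        field_simp [hwh k]
        ring
      have hkey : ∀ k, w' k / (th - xh k) = w k / (t - x k) * (1 + η k) := by
        intro k
        have h1 := htx k
        have h2 := hbq k
        have h3 := (h1ζ k).ne'
        rw [hu k, hwrel k, hηeq k]
        field_simp [h1, h2, h3]
        ring
      have hDD : (∑ k, w k / (t - x k)) ≠ 0 := hden t htmem htnode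
      have hEE : ∑ k, w k * η k / (t - x k) = ee * (∑ k, w k / (t - x k)) := by
        have h1 : ee = (∑ k, w k * η k / (t - x k)) / (∑ k, w k / (t - x k)) := by
          rw [heedef]
          unfold bary
          rw [dif_neg (show ¬∃ k, t = x k from fun ⟨k, hk⟩ => htnode k hk)]
        rw [h1, div_mul_cancel₀ _ hDD]
      have hD' : (∑ k, w' k / (th - xh k)) = (∑ k, w k / (t - x k)) * (1 + ee) := by
        have h1 : ∀ k, w' k / (th - xh k) = w k / (t - x k) + w k * η k / (t - x k) := by
          intro k; rw [hkey k]; ring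
        rw [Finset.sum_congr rfl (fun k _ => h1 k), Finset.sum_add_distrib, hEE]
        ring
      have h1e : (1 : ℝ) + ee ≠ 0 := hee1.ne'
      have hαeq : ∀ k, (1 + α k) * (1 + ee) = 1 + η k := by
        intro k
        rw [hαval k]
        field_simp
        ring
      have hN' : (∑ k, w' k * y' k / (th - xh k))
          = (∑ k, w k * (y k * (1 + α k) * (1 + ν k)) / (t - x k)) * (1 + ee) := by
        rw [Finset.sum_mul]
        refine Finset.sum_congr rfl (fun k _ => ?_)
        have e1 := hkey k
        have e2 := hαeq k
        calc w' k * y' k / (th - xh k) = (w' k / (th - xh k)) * y' k := by ring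
          _ = (w k / (t - x k) * (1 + η k)) * y' k := by rw [e1]
          _ = (w k / (t - x k)) * y' k * ((1 + α k) * (1 + ee)) := by rw [e2]; ring
          _ = w k * (y k * (1 + α k) * (1 + ν k)) / (t - x k) * (1 + ee) := by
              rw [hy' k]; ring
      unfold bary
      rw [dif_neg (show ¬∃ k, th = xh k from fun ⟨k, hk⟩ => hex k hk),
        dif_neg (show ¬∃ k, t = x k from fun ⟨k, hk⟩ => htnode k hk),
        hN', hD', mul_div_mul_right _ _ h1e]
    -- locate `th` among the brackets
    have hxkm : xhm < xh km := hmonoM2 km hkm1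
    have hxkp : xh kp < xhp := hmonoP2 kp hkp1
    by_cases hcase1 : th < xh km
    · refine master xm xhm (x km) (xh km) δm (δ km) le_rfl hxkmxp.le hkm1.le hxkm hth.1
        hcase1.le ?_ hrelM hdbm (fun k => hrelN km k) (fun k => hdb km k) hMm (hsupx km)
      intro k
      rcases le_or_gt km k with h | h
      · refine Or.inr ?_
        rcases eq_or_lt_of_le h with h' | h'
        · exact le_of_eq (congrArg xh h')
        · exact (hmono km k (hx h')).le
      · refine Or.inl ?_
        have hxk : ¬ xm < x k := fun hc => absurd (hkm2 k hc) (not_le.mpr h)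
        push_neg at hxk
        rcases eq_or_lt_of_le hxk with h' | h'
        · exact le_of_eq ((him k).mp h')
        · exact (hmonoM1 k h').le
    · by_cases hcase2 : xh kp < th
      · refine master (x kp) (xh kp) xp xhp (δ kp) δp
          (lt_of_lt_of_le hkm1 (hx.monotone hkmkp)).le le_rfl hkp1.le hxkp hcase2.le hth.2
          ?_ (fun k => hrelN kp k) (fun k => hdb kp k) hrelP hdbp (hsupx kp) hMp
        intro k
        rcases le_or_gt k kp with h | h
        · refine Or.inl ?_
          rcases eq_or_lt_of_le h with h' | h'
          · exact le_of_eq (congrArg xh h')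
          · exact (hmono k kp (hx h')).le
        · refine Or.inr ?_
          have hxk : ¬ x k < xp := fun hc => absurd (hkp2 k hc) (not_le.mpr h)
          push_neg at hxk
          rcases eq_or_lt_of_le hxk with h' | h'
          · exact le_of_eq ((hip k).mp h'.symm).symm
          · exact (hmonoP1 k h').le
      · push_neg at hcase1 hcase2
        have hc1 : xh km < th := lt_of_le_of_ne hcase1 (fun h => hex km h.symm)
        have hc2 : th < xh kp := lt_of_le_of_ne hcase2 (hex kp)
        set S := Finset.univ.filter (fun k => xh k < th) with hS
        have hkmS : km ∈ S := by simp [hS, hc1]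
        have hSne : S.Nonempty := ⟨km, hkmS⟩
        set j := S.max' hSne with hj
        have hjS : j ∈ S := S.max'_mem hSne
        have hjth : xh j < th := by
          have h1 := hjS
          simp [hS] at h1
          exact h1
        have hjkm : km ≤ j := S.le_max' km hkmS
        have hjkp : j < kp := by
          by_contra h
          push_neg at h
          have h2 : xh kp ≤ xh j := by
            rcases eq_or_lt_of_le h with h' | h'
            · exact le_of_eq (congrArg xh h')
            · exact (hmono kp j (hx h')).le
          linarith only [h2, hjth, hc2]
        have hjlt : (j : ℕ) + 1 < n + 1 := by
          have h1 : (j : ℕ) < (kp : ℕ) := hjkp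
          have h2 : (kp : ℕ) < n + 1 := kp.isLt
          omega
        set j1 : Fin (n + 1) := ⟨(j : ℕ) + 1, hjlt⟩ with hj1
        have hjj1 : j < j1 := by
          rw [Fin.lt_def]
          simp [hj1]
        have hj1kp : j1 ≤ kp := by
          rw [Fin.le_def]
          have h1 : (j : ℕ) < (kp : ℕ) := hjkp
          simp [hj1]
          omega
        have hthj1 : th < xh j1 := by
          have hnot : j1 ∉ S := fun h => absurd (S.le_max' j1 h) (not_le.mpr hjj1)
          have h2 : ¬ xh j1 < th := by
            intro hcc
            exact hnot (by simp [hS, hcc])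
          exact lt_of_le_of_ne (not_lt.mp h2) (hex j1)
        refine master (x j) (xh j) (x j1) (xh j1) (δ j) (δ j1)
          (lt_of_lt_of_le hkm1 (hx.monotone hjkm)).le
          (lt_of_le_of_lt (hx.monotone hj1kp) hkp1).le
          (hx hjj1).le (hmono j j1 (hx hjj1)) hjth.le hthj1.le
          ?_ (fun k => hrelN j k) (fun k => hdb j k) (fun k => hrelN j1 k)
          (fun k => hdb j1 k) (hsupx j) (hsupx j1)
        intro k
        rcases le_or_gt k j with h | h
        · refine Or.inl ?_
          rcases eq_or_lt_of_le h with h' | h'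
          · exact le_of_eq (congrArg xh h')
          · exact (hmono k j (hx h')).le
        · refine Or.inr ?_
          have h2 : j1 ≤ k := by
            rw [Fin.le_def]
            have h3 : (j : ℕ) < (k : ℕ) := h
            simp [hj1]
            omega
          rcases eq_or_lt_of_le h2 with h' | h'
          · exact le_of_eq (congrArg xh h')
          · exact (hmono j1 k (hx h')).le
end

section
/- Let x_0 < x_1 < … < x_n be real nodes, let w_i := Π_{m ≠ i} 1/(x_i − x_m) be the true barycentric weights, let ŵ_0, …, ŵ_n be nonzero perturbed weights, and set ζ_i := (w_i − ŵ_i)/ŵ_i and ‖ζ‖_∞ := max_i |ζ_i|. Let j and k be indices such that |ζ_k| = ‖ζ‖_∞ and ζ_k ζ_j ≤ 0, and define S := Σ_{i ≠ j} |w_i|/|x_j − x_i|. Let ε > 0 with 2.5(n + 3)ε ≤ ‖ζ‖_∞ ≤ 0.001, and let x ∈ ℝ satisfy 0 < |(x − x_j)/w_j|·S ≤ 0.01 and sup_{i ≠ j} |(x − x_j)/(x_i − x_j)| < 0.01. Let t_0, …, t_n and s be real numbers with |t_i| ≤ (n + 2)ε/(1 − (n + 2)ε) for all i and |s| ≤ (n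 + 3)ε/(1 − (n + 3)ε). If β_k ∈ ℝ satisfies ( ŵ_k(1 + s)/(x − x_k) ) / ( Σ_{i=0}^n ŵ_i(1 + t_i)/(x − x_i) ) = ( w_k(1 + β_k)/(x − x_k) ) / ( Σ_{i=0}^n w_i/(x − x_i) ), then |β_k| ≥ 0.16·‖ζ‖_∞. -/
set_option maxHeartbeats 2000000


/-- **exact-arithmetic core of the paper's Theorem 3.1.**
With nodes `x_0 < … < x_n`, true barycentric weights `w_i = Π_{m≠i} 1/(x_i − x_m)`,
nonzero perturbed weights `ŵ`, `ζ_i := (w_i − ŵ_i)/ŵ_i`, indices `j, k` with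
`|ζ_k| = ‖ζ‖_∞`, `ζ_k ζ_j ≤ 0`, `S := Σ_{i≠j} |w_i|/|x_j − x_i|`,
`2.5(n+3)ε ≤ ‖ζ‖_∞ ≤ 0.001`, a point `x` with `0 < |(x − x_j)/w_j|·S ≤ 0.01` and
`sup_{i≠j} |(x − x_j)/(x_i − x_j)| < 0.01`, and rounding perturbations `t_i, s`
with `|t_i| ≤ (n+2)ε/(1−(n+2)ε)` and `|s| ≤ (n+3)ε/(1−(n+3)ε)`: if `β_k`
satisfies the backward-error equation
`(ŵ_k(1+s)/(x − x_k)) / (Σ_i ŵ_i(1+t_i)/(x − x_i))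
  = (w_k(1+β_k)/(x − x_k)) / (Σ_i w_i/(x − x_i))`
then `|β_k| ≥ 0.16·‖ζ‖_∞`. -/
theorem backward_error_lower_bound
    (n : ℕ) (x w wh : Fin (n + 1) → ℝ)
    (hx : StrictMono x)
    (hw : ∀ i, w i = ∏ m ∈ Finset.univ.erase i, (x i - x m)⁻¹)
    (hwh : ∀ i, wh i ≠ 0)
    (ζ : Fin (n + 1) → ℝ) (hζ : ∀ i, ζ i = (w i - wh i) / wh i)
    (j k : Fin (n + 1))
    (hk : |ζ k| = supNorm ζ) (hjk : ζ k * ζ j ≤ 0)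
    (S : ℝ) (hS : S = ∑ i ∈ Finset.univ.erase j, |w i| / |x j - x i|)
    (ε : ℝ) (hε : 0 < ε)
    (hζ1 : 2.5 * ((n : ℝ) + 3) * ε ≤ supNorm ζ) (hζ2 : supNorm ζ ≤ 0.001)
    (t : ℝ)
    (ht1 : 0 < |(t - x j) / w j| * S) (ht2 : |(t - x j) / w j| * S ≤ 0.01)
    (ht3 : ∀ i, i ≠ j → |(t - x j) / (x i - x j)| < 0.01)
    (tt : Fin (n + 1) → ℝ) (s : ℝ)
    (htt : ∀ i, |tt i| ≤ ((n : ℝ) + 2) * ε / (1 - ((n : ℝ) + 2) * ε))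
    (hs : |s| ≤ ((n : ℝ) + 3) * ε / (1 - ((n : ℝ) + 3) * ε))
    (βk : ℝ)
    (hβ : (wh k * (1 + s) / (t - x k)) / (∑ i, wh i * (1 + tt i) / (t - x i)) =
          (w k * (1 + βk) / (t - x k)) / (∑ i, w i / (t - x i))) :
    0.16 * supNorm ζ ≤ |βk| := by
  have hZ0 : (0:ℝ) < supNorm ζ := lt_of_lt_of_le (by positivity) hζ1
  set Z := supNorm ζ with hZdef
  have habs : ∀ i, |ζ i| ≤ Z := by
    intro i; rw [hZdef, supNorm]; exact Finset.le_sup' (fun m => |ζ m|) (Finset.mem_univ i)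
  have hζb : ∀ i, |ζ i| ≤ 0.001 := fun i => (habs i).trans hζ2
  have h1ζl : ∀ i, (0.999:ℝ) ≤ 1 + ζ i := by
    intro i; have := (abs_le.mp (hζb i)).1; linarith
  have h1ζu : ∀ i, 1 + ζ i ≤ (1.001:ℝ) := by
    intro i; have := (abs_le.mp (hζb i)).2; linarith
  have h1ζ : ∀ i, 1 + ζ i ≠ 0 := fun i => by have := h1ζl i; intro h; rw [h] at this; norm_num at this
  -- ε bounds
  have hn3 : ((n:ℝ) + 3) * ε ≤ 0.4 * Z := by nlinarith
  have hn3' : ((n:ℝ) + 3) * ε ≤ 0.0004 := by linarith [hζ2]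
  have hn2 : ((n:ℝ) + 2) * ε ≤ ((n:ℝ) + 3) * ε := by nlinarith
  have hn2nn : (0:ℝ) ≤ ((n:ℝ) + 2) * ε := by positivity
  have hsb : |s| ≤ 0.4002 * Z := by
    have h2 : (0:ℝ) < 1 - ((n:ℝ) + 3) * ε := by linarith
    refine hs.trans ?_
    rw [div_le_iff₀ h2]; nlinarith
  have htb : ∀ i, |tt i| ≤ 0.4002 * Z := by
    intro i
    have h2 : (0:ℝ) < 1 - ((n:ℝ) + 2) * ε := by linarith
    refine (htt i).trans ?_
    rw [div_le_iff₀ h2]; nlinarith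
  -- node facts
  have hxne : ∀ ⦃i m : Fin (n+1)⦄, i ≠ m → x i - x m ≠ 0 :=
    fun i m h => sub_ne_zero.mpr (hx.injective.ne h)
  have hwne : ∀ i, w i ≠ 0 := by
    intro i; rw [hw i]
    exact Finset.prod_ne_zero_iff.mpr fun m hm =>
      inv_ne_zero (hxne (Finset.ne_of_mem_erase hm).symm)
  set δ := t - x j with hδdef
  have hSnn : 0 ≤ S := by
    rw [hS]; exact Finset.sum_nonneg fun i _ => by positivity
  have hδw : 0 < |δ / w j| := by
    rcases (abs_nonneg (δ / w j)).lt_or_eq with h | h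
    · exact h
    · exfalso; rw [← h] at ht1; simp at ht1
  have hδ : δ ≠ 0 := by
    intro h; rw [h] at hδw; simp at hδw
  have hxij : ∀ i, i ≠ j → 0 < |x i - x j| := fun i h => abs_pos.mpr (hxne h)
  have hti : ∀ i, i ≠ j → 0.99 * |x i - x j| ≤ |t - x i| := by
    intro i hij
    have h1 : |δ| < 0.01 * |x i - x j| := by
      have h := ht3 i hij
      rw [abs_div, div_lt_iff₀ (hxij i hij)] at h
      linarith [h]
    have h3 : t - x i = δ - (x i - x j) := by rw [hδdef]; ring
    rw [h3, abs_sub_comm δ (x i - x j)]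
    have h2 := abs_sub_abs_le_abs_sub (x i - x j) δ
    linarith
  have htine : ∀ i, t - x i ≠ 0 := by
    intro i
    by_cases hij : i = j
    · rw [hij]; exact hδ
    · intro h
      have := hti i hij
      rw [h] at this; simp at this
      have := hxij i hij; nlinarith
  -- μ and the perturbed weights
  set μ : Fin (n+1) → ℝ := fun i => (tt i - ζ i) / (1 + ζ i) with hμdef
  have hμi : ∀ i, μ i = (tt i - ζ i) / (1 + ζ i) := fun i => rfl
  have habssub : ∀ i, |tt i - ζ i| ≤ 1.4002 * Z := by
    intro i
    have := abs_sub (tt i) (ζ i)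
    linarith [htb i, habs i]
  have hμb : ∀ i, |μ i| ≤ 1.402 * Z := by
    intro i
    have hpos : (0:ℝ) < 1 + ζ i := by linarith [h1ζl i]
    have h2 : |1 + ζ i| = 1 + ζ i := abs_of_pos hpos
    rw [hμi i, abs_div, h2, div_le_iff₀ hpos]
    nlinarith [h1ζl i, habssub i]
  have hwhζ : ∀ i, wh i * (1 + ζ i) = w i := by
    intro i
    have h := hζ i
    rw [eq_div_iff (hwh i)] at h
    linear_combination h
  have hwht : ∀ i, wh i * (1 + tt i) = w i * (1 + μ i) := by
    intro i
    have hc : (1 + ζ i) * μ i = tt i - ζ i := by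
      rw [hμi i, mul_comm, div_mul_cancel₀ _ (h1ζ i)]
    rw [← hwhζ i]
    linear_combination (-wh i) * hc
  -- sums
  set Sg1 : ℝ := ∑ i ∈ Finset.univ.erase j, w i / (t - x i) with hSg1def
  set Sg2 : ℝ := ∑ i ∈ Finset.univ.erase j, w i * μ i / (t - x i) with hSg2def
  set r : ℝ := δ / w j * Sg1 with hrdef
  set F : ℝ := δ / w j * Sg2 with hFdef
  have hSg1b : |Sg1| ≤ S / 0.99 := by
    rw [hSg1def, hS, Finset.sum_div]
    refine (Finset.abs_sum_le_sum_abs _ _).trans (Finset.sum_le_sum ?_)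
    intro i hi
    have hij : i ≠ j := Finset.ne_of_mem_erase hi
    rw [abs_div, abs_sub_comm (x j) (x i), div_div]
    refine div_le_div_of_nonneg_left (abs_nonneg _) ?_ ?_
    · exact mul_pos (hxij i hij) (by norm_num)
    · rw [mul_comm]; exact hti i hij
  have hSg2b : |Sg2| ≤ 1.402 * Z * (S / 0.99) := by
    rw [hSg2def, hS]
    refine (Finset.abs_sum_le_sum_abs _ _).trans ?_
    have hstep : ∀ i ∈ Finset.univ.erase j,
        |w i * μ i / (t - x i)| ≤ 1.402 * Z * (|w i| / |x j - x i| / 0.99) := by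
      intro i hi
      have hij : i ≠ j := Finset.ne_of_mem_erase hi
      have hb : |w i / (t - x i)| ≤ |w i| / |x j - x i| / 0.99 := by
        rw [abs_div, abs_sub_comm (x j) (x i), div_div]
        refine div_le_div_of_nonneg_left (abs_nonneg _) ?_ ?_
        · exact mul_pos (hxij i hij) (by norm_num)
        · rw [mul_comm]; exact hti i hij
      have hrw : w i * μ i / (t - x i) = μ i * (w i / (t - x i)) := by ring
      rw [hrw, abs_mul]
      exact mul_le_mul (hμb i) hb (abs_nonneg _) (by positivity)
    refine (Finset.sum_le_sum hstep).trans ?_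
    rw [← Finset.mul_sum, Finset.sum_div]
  have hδwS : |δ / w j| * S ≤ 0.01 := ht2
  have hrb : |r| ≤ 0.0102 := by
    rw [hrdef, abs_mul]
    calc |δ / w j| * |Sg1| ≤ |δ / w j| * (S / 0.99) :=
          mul_le_mul_of_nonneg_left hSg1b (abs_nonneg _)
      _ = (|δ / w j| * S) / 0.99 := by ring
      _ ≤ 0.01 / 0.99 := by
          have h := ht2; norm_num at h ⊢; linarith
      _ ≤ 0.0102 := by norm_num
  have hFb : |F| ≤ 0.0145 * Z := by
    rw [hFdef, abs_mul]
    calc |δ / w j| * |Sg2| ≤ |δ / w j| * (1.402 * Z * (S / 0.99)) :=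
          mul_le_mul_of_nonneg_left hSg2b (abs_nonneg _)
      _ = (1.402 / 0.99) * Z * (|δ / w j| * S) := by ring
      _ ≤ (1.402 / 0.99) * Z * 0.01 := by nlinarith [hZ0]
      _ ≤ 0.0145 * Z := by nlinarith [hZ0]
  -- splitting of the sums
  have hsplit : (∑ i, w i / (t - x i)) = w j / δ + Sg1 :=
    (Finset.add_sum_erase _ (fun i => w i / (t - x i)) (Finset.mem_univ j)).symm
  have hterm : ∀ i, wh i * (1 + tt i) / (t - x i) = w i / (t - x i) + w i * μ i / (t - x i) := by
    intro i; rw [hwht i]; ring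
  have hsum2 : (∑ i, wh i * (1 + tt i) / (t - x i)) =
      (∑ i, w i / (t - x i)) + (∑ i, w i * μ i / (t - x i)) := by
    rw [← Finset.sum_add_distrib]; exact Finset.sum_congr rfl fun i _ => hterm i
  have hsplit3 : (∑ i, w i * μ i / (t - x i)) = w j * μ j / δ + Sg2 :=
    (Finset.add_sum_erase _ (fun i => w i * μ i / (t - x i)) (Finset.mem_univ j)).symm
  set P : ℝ := 1 + r + μ j + F with hPdef
  have hD : (∑ i, w i / (t - x i)) = w j / δ * (1 + r) := by
    rw [hsplit, hrdef]
    field_simp [hwne j, hδ]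
  have hDh : (∑ i, wh i * (1 + tt i) / (t - x i)) = w j / δ * P := by
    rw [hsum2, hsplit, hsplit3, hPdef, hrdef, hFdef]
    field_simp [hwne j, hδ]
    ring
  -- bounds on P and nonvanishing
  have hrl := (abs_le.mp hrb).1
  have hru := (abs_le.mp hrb).2
  have hμjl := (abs_le.mp (hμb j)).1
  have hμju := (abs_le.mp (hμb j)).2
  have hFl := (abs_le.mp hFb).1
  have hFu := (abs_le.mp hFb).2
  have hPl : 0.988 ≤ P := by rw [hPdef]; linarith only [hrl, hμjl, hFl, hζ2, hZ0]
  have hPu : P ≤ 1.012 := by rw [hPdef]; linarith only [hru, hμju, hFu, hζ2, hZ0]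
  have hPne : P ≠ 0 := by intro h; rw [h] at hPl; norm_num at hPl
  have h1rne : (1:ℝ) + r ≠ 0 := by intro h; linarith only [hrl, h]
  have hwδ : w j / δ ≠ 0 := div_ne_zero (hwne j) hδ
  have hDne : (∑ i, w i / (t - x i)) ≠ 0 := by
    rw [hD]; exact mul_ne_zero hwδ h1rne
  have hDhne : (∑ i, wh i * (1 + tt i) / (t - x i)) ≠ 0 := by
    rw [hDh]; exact mul_ne_zero hwδ hPne
  -- the key algebraic identity
  rw [div_eq_div_iff hDhne hDne, hD, hDh] at hβ
  have hβ' : wh k * (1 + s) * (1 + r) = w k * (1 + βk) * P := by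
    have htk := htine k
    field_simp at hβ
    have h5 : w j * (wh k * (1 + s) * (1 + r)) = w j * (w k * (1 + βk) * P) := by
      linear_combination hβ
    exact mul_left_cancel₀ (hwne j) h5
  have h4 : w k * ((1 + s) * (1 + r)) = w k * ((1 + βk) * ((1 + ζ k) * P)) := by
    linear_combination (1 + ζ k) * hβ' - (1 + s) * (1 + r) * hwhζ k
  have hkey : (1 + s) * (1 + r) = (1 + βk) * ((1 + ζ k) * P) :=
    mul_left_cancel₀ (hwne k) h4
  set e : ℝ := s - tt j + (s - ζ k) * r - (ζ k - ζ j) * (tt j - ζ j) / (1 + ζ j)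
      - (1 + ζ k) * F with hedef
  have hG : (1 + s) * (1 + r) - (1 + ζ k) * P = (ζ j - ζ k) + e := by
    rw [hedef, hPdef, hμi j]
    field_simp [h1ζ j]
    ring
  have hgeq : βk * ((1 + ζ k) * P) = (ζ j - ζ k) + e := by
    linear_combination hG - hkey
  -- error bounds
  have p1 : |s - tt j| ≤ 0.8004 * Z := by
    have h := abs_sub s (tt j); linarith only [h, hsb, htb j]
  have p2 : |(s - ζ k) * r| ≤ 0.0143 * Z := by
    rw [abs_mul]
    have a1 : |s - ζ k| ≤ 1.4002 * Z := by
      have h := abs_sub s (ζ k); linarith only [h, hsb, habs k]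
    calc |s - ζ k| * |r| ≤ (1.4002 * Z) * 0.0102 :=
          mul_le_mul a1 hrb (abs_nonneg _) (by positivity)
      _ ≤ 0.0143 * Z := by linarith only [hZ0]
  have p3 : |(ζ k - ζ j) * (tt j - ζ j) / (1 + ζ j)| ≤ 0.0029 * Z := by
    rw [abs_div, abs_mul]
    have a1 : |ζ k - ζ j| ≤ 2 * Z := by
      have h := abs_sub (ζ k) (ζ j); linarith only [h, habs k, habs j]
    have a2 := habssub j
    have hpos : (0:ℝ) < 1 + ζ j := by linarith [h1ζl j]
    have a3 : |1 + ζ j| = 1 + ζ j := abs_of_pos hpos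
    rw [a3, div_le_iff₀ hpos]
    have hm : |ζ k - ζ j| * |tt j - ζ j| ≤ 2 * Z * (1.4002 * Z) :=
      mul_le_mul a1 a2 (abs_nonneg _) (by positivity)
    have hm2 : Z * Z ≤ Z * 0.001 := mul_le_mul_of_nonneg_left hζ2 hZ0.le
    have hm3 : Z * 0.999 ≤ Z * (1 + ζ j) := mul_le_mul_of_nonneg_left (h1ζl j) hZ0.le
    linarith only [hm, hm2, hm3, hZ0]
  have p4 : |(1 + ζ k) * F| ≤ 0.0146 * Z := by
    rw [abs_mul]
    have a1 : |1 + ζ k| ≤ 1.001 := abs_le.mpr ⟨by linarith [h1ζl k], h1ζu k⟩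
    calc |1 + ζ k| * |F| ≤ 1.001 * (0.0145 * Z) :=
          mul_le_mul a1 hFb (abs_nonneg _) (by norm_num)
      _ ≤ 0.0146 * Z := by linarith only [hZ0]
  have he : |e| ≤ 0.8322 * Z := by
    rw [hedef]
    have q1 := abs_add_le (s - tt j) ((s - ζ k) * r)
    have q2 := abs_sub (s - tt j + (s - ζ k) * r) ((ζ k - ζ j) * (tt j - ζ j) / (1 + ζ j))
    have q3 := abs_sub (s - tt j + (s - ζ k) * r - (ζ k - ζ j) * (tt j - ζ j) / (1 + ζ j))
        ((1 + ζ k) * F)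
    linarith only [q1, q2, q3, p1, p2, p3, p4, hZ0]
  have hlow : Z ≤ |ζ j - ζ k| := by
    rw [← hk]
    rcases le_or_gt 0 (ζ k) with hc | hc
    · rcases eq_or_lt_of_le hc with h0 | h0
      · rw [← h0]; simpa using abs_nonneg (ζ j - ζ k)
      · have hj' : ζ j ≤ 0 := by nlinarith only [hjk, h0]
        rw [abs_of_nonneg hc, abs_of_nonpos (by linarith only [hj', hc] : ζ j - ζ k ≤ 0)]
        linarith only [hj']
    · have hj' : 0 ≤ ζ j := by nlinarith only [hjk, hc]
      rw [abs_of_neg hc, abs_of_nonneg (by linarith only [hj', hc] : (0:ℝ) ≤ ζ j - ζ k)]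
      linarith only [hj']
  have habsg : |(ζ j - ζ k) + e| ≤ |βk| * 1.0133 := by
    rw [← hgeq, abs_mul, abs_mul]
    have b1 : |1 + ζ k| ≤ 1.001 := abs_le.mpr ⟨by linarith [h1ζl k], h1ζu k⟩
    have b2 : |P| ≤ 1.012 := abs_le.mpr ⟨by linarith, hPu⟩
    calc |βk| * (|1 + ζ k| * |P|) ≤ |βk| * (1.001 * 1.012) := by
          refine mul_le_mul_of_nonneg_left ?_ (abs_nonneg βk)
          exact mul_le_mul b1 b2 (abs_nonneg _) (by norm_num)
      _ ≤ |βk| * 1.0133 := by linarith only [abs_nonneg βk]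
  have hgl : Z - 0.8322 * Z ≤ |(ζ j - ζ k) + e| := by
    have h := abs_sub ((ζ j - ζ k) + e) e
    have h2 : (ζ j - ζ k) + e - e = ζ j - ζ k := by ring
    rw [h2] at h
    linarith
  linarith only [hgl, habsg, hZ0, he, hlow]
end

section
/- Let n ≥ 0, ε > 0, and ζ_0, …, ζ_n ∈ ℝ with 2.5(n + 3)ε ≤ ‖ζ‖_∞ ≤ 0.001, where ‖ζ‖_∞ := max_i |ζ_i|. If θ ∈ ℝ satisfies |θ| ≤ (n + 2)ε/(1 − (n + 2)ε), then |θ| ≤ 0.401·‖ζ‖_∞, and for every i the quantity ψ_i := (ζ_i² + θ)/(1 + ζ_i) satisfies |ψ_i| ≤ 0.403·‖ζ‖_∞. -/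
/-- If `2.5(n + 3)ε ≤ ‖ζ‖_∞ ≤ 0.001` and `|θ| ≤ (n + 2)ε/(1 − (n + 2)ε)` then
`|θ| ≤ 0.401·‖ζ‖_∞` and, for every `i`, `ψ_i := (ζ_i² + θ)/(1 + ζ_i)` satisfies
`|ψ_i| ≤ 0.403·‖ζ‖_∞`. -/
theorem auxiliary_perturbation_bounds
    (n : ℕ) (ε : ℝ) (hε : 0 < ε) (ζ : Fin (n + 1) → ℝ)
    (h1 : 2.5 * ((n : ℝ) + 3) * ε ≤ supNorm ζ) (h2 : supNorm ζ ≤ 0.001)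
    (θ : ℝ) (hθ : |θ| ≤ ((n : ℝ) + 2) * ε / (1 - ((n : ℝ) + 2) * ε)) :
    |θ| ≤ 0.401 * supNorm ζ ∧
      ∀ i, |((ζ i) ^ 2 + θ) / (1 + ζ i)| ≤ 0.403 * supNorm ζ := by
  set S := supNorm ζ with hSdef
  have hn : (0:ℝ) ≤ (n:ℝ) := Nat.cast_nonneg n
  set a : ℝ := ((n : ℝ) + 2) * ε with ha
  have ha0 : 0 < a := by positivity
  have haS : 2.5 * a ≤ S := by
    calc 2.5 * a ≤ 2.5 * ((n:ℝ) + 3) * ε := by nlinarith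
    _ ≤ S := h1
  have ha1 : a ≤ 0.0004 := by nlinarith
  have h1a : (0.9996:ℝ) ≤ 1 - a := by linarith
  have hθ' : |θ| * (1 - a) ≤ a :=
    (le_div_iff₀ (by linarith : (0:ℝ) < 1 - a)).mp hθ
  have hθsmall : |θ| ≤ 0.0005 := by nlinarith [abs_nonneg θ]
  have hθbound : |θ| ≤ 0.401 * S := by nlinarith [abs_nonneg θ]
  refine ⟨hθbound, fun i => ?_⟩
  have hζi : |ζ i| ≤ S := Finset.le_sup' (fun k => |ζ k|) (Finset.mem_univ i)
  have hS0 : 0 < S := lt_of_lt_of_le (by positivity) h1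
  have hd : (0.999:ℝ) ≤ 1 + ζ i := by
    have := abs_le.mp (le_trans hζi h2)
    linarith [this.1]
  have habs : |1 + ζ i| = 1 + ζ i := abs_of_pos (by linarith)
  rw [abs_div, habs, div_le_iff₀ (by linarith : (0:ℝ) < 1 + ζ i)]
  have hnum : |(ζ i) ^ 2 + θ| ≤ 0.402 * S := by
    calc |(ζ i) ^ 2 + θ| ≤ |(ζ i)^2| + |θ| := abs_add_le _ _
    _ ≤ S * S + 0.401 * S := by
        have : |(ζ i)^2| = |ζ i| * |ζ i| := by rw [sq, abs_mul]
        nlinarith [abs_nonneg (ζ i)]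
    _ ≤ 0.402 * S := by nlinarith
  have hζi' := abs_le.mp (le_trans hζi h2)
  nlinarith [hζi'.1, hζi'.2]
end

section
/- Let x_0 < x_1 < … < x_n be real nodes, let w_0, …, w_n be nonzero real weights, and let ζ_0, …, ζ_n, ψ_0, …, ψ_n, φ be real numbers with ‖ζ‖_∞ := max_i |ζ_i| ≤ 0.001, |ψ_i| ≤ 0.403·‖ζ‖_∞ for all i, and |φ| ≤ 0.403·‖ζ‖_∞. Let j and k be indices with |ζ_k| = ‖ζ‖_∞ and ζ_k ζ_j ≤ 0, and let x ∈ ℝ satisfy sup_{i ≠ j} |(x − x_j)/(x_i − x_j)| < 0.01 and 0 < |(x − x_j)/w_j|·S ≤ 0.01, where S := Σ_{i ≠ j} |w_i|/|x_j − x_i|. Define ξ := (x − x_j)/w_j, A := Σ_{i ≠ j} w_i/(x − x_i), B := Σ_{i ≠ j} w_i ζ_i/(x − x_i), C := Σ_{i ≠ j} w_i ψ_i/(x − x_i), and N := ζ_j − ζ_k + φ − ψ_j + ξ(Aφ − Aζ_k + B − C). Then |N| ≥ 0.164·‖ζ‖_∞. -/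
set_option maxHeartbeats 1000000


/-- With nodes `x_0 < … < x_n`, nonzero weights `w`, perturbations `ζ, ψ, φ` with
`‖ζ‖_∞ ≤ 0.001`, `|ψ_i| ≤ 0.403‖ζ‖_∞`, `|φ| ≤ 0.403‖ζ‖_∞`, indices `j, k` with
`|ζ_k| = ‖ζ‖_∞`, `ζ_k ζ_j ≤ 0`, and a point `t` satisfying the localization
hypotheses, the numerator
`N := ζ_j − ζ_k + φ − ψ_j + ξ(Aφ − Aζ_k + B − C)` satisfies `|N| ≥ 0.164‖ζ‖_∞`. -/
theorem numerator_lower_bound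
    (n : ℕ) (x w : Fin (n + 1) → ℝ)
    (hx : StrictMono x) (hw : ∀ i, w i ≠ 0)
    (ζ ψ : Fin (n + 1) → ℝ) (φ : ℝ)
    (hζ : supNorm ζ ≤ 0.001)
    (hψ : ∀ i, |ψ i| ≤ 0.403 * supNorm ζ)
    (hφ : |φ| ≤ 0.403 * supNorm ζ)
    (j k : Fin (n + 1))
    (hk : |ζ k| = supNorm ζ) (hjk : ζ k * ζ j ≤ 0)
    (t : ℝ)
    (ht3 : ∀ i, i ≠ j → |(t - x j) / (x i - x j)| < 0.01)
    (S : ℝ) (hS : S = ∑ i ∈ Finset.univ.erase j, |w i| / |x j - x i|)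
    (ht1 : 0 < |(t - x j) / w j| * S) (ht2 : |(t - x j) / w j| * S ≤ 0.01)
    (ξ A B C N : ℝ)
    (hξ : ξ = (t - x j) / w j)
    (hA : A = ∑ i ∈ Finset.univ.erase j, w i / (t - x i))
    (hB : B = ∑ i ∈ Finset.univ.erase j, w i * ζ i / (t - x i))
    (hC : C = ∑ i ∈ Finset.univ.erase j, w i * ψ i / (t - x i))
    (hN : N = ζ j - ζ k + φ - ψ j + ξ * (A * φ - A * ζ k + B - C)) :
    0.164 * supNorm ζ ≤ |N| := by
  set m := supNorm ζ with hm
  have habs : ∀ i, |ζ i| ≤ m := by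
    intro i
    rw [hm, supNorm]
    exact Finset.le_sup' (fun k => |ζ k|) (Finset.mem_univ i)
  have hm0 : 0 ≤ m := hk ▸ abs_nonneg _
  have hkey : ∀ i ∈ Finset.univ.erase j,
      0 < |x j - x i| ∧ 0.99 * |x j - x i| ≤ |t - x i| := by
    intro i hi
    have hij : i ≠ j := Finset.ne_of_mem_erase hi
    have hxne : x i ≠ x j := fun h => hij (hx.injective h)
    have hpos : 0 < |x i - x j| := abs_pos.mpr (sub_ne_zero.mpr hxne)
    have h1 := ht3 i hij
    rw [abs_div] at h1
    have h2 : |t - x j| < 0.01 * |x i - x j| := (div_lt_iff₀ hpos).mp h1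
    have h3 : |x j - x i| = |x i - x j| := abs_sub_comm _ _
    have h4 : |x i - x j| ≤ |t - x i| + |t - x j| := by
      calc |x i - x j| = |(t - x j) + -(t - x i)| := by ring_nf
        _ ≤ |t - x j| + |-(t - x i)| := abs_add_le _ _
        _ = |t - x i| + |t - x j| := by rw [abs_neg]; ring
    exact ⟨h3 ▸ hpos, by rw [h3]; linarith⟩
  have hS0 : 0 < S := by
    by_contra h
    push_neg at h
    nlinarith [abs_nonneg ((t - x j) / w j)]
  have hAb : |A| ≤ (1 / 0.99) * S := by
    rw [hA, hS, Finset.mul_sum]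
    refine (Finset.abs_sum_le_sum_abs _ _).trans (Finset.sum_le_sum ?_)
    intro i hi
    obtain ⟨hd, hti⟩ := hkey i hi
    rw [abs_div]
    rw [div_le_iff₀ (by linarith)]
    have : 0 ≤ |w i| := abs_nonneg _
    calc |w i| = (1 / 0.99 * (|w i| / |x j - x i|)) * (0.99 * |x j - x i|) := by
          field_simp
      _ ≤ (1 / 0.99 * (|w i| / |x j - x i|)) * |t - x i| := by
          apply mul_le_mul_of_nonneg_left hti; positivity
  have hBb : |B| ≤ (m / 0.99) * S := by
    rw [hB, hS, Finset.mul_sum]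
    refine (Finset.abs_sum_le_sum_abs _ _).trans (Finset.sum_le_sum ?_)
    intro i hi
    obtain ⟨hd, hti⟩ := hkey i hi
    rw [abs_div, abs_mul]
    rw [div_le_iff₀ (by linarith)]
    calc |w i| * |ζ i| ≤ |w i| * m := by
          exact mul_le_mul_of_nonneg_left (habs i) (abs_nonneg _)
      _ = (m / 0.99 * (|w i| / |x j - x i|)) * (0.99 * |x j - x i|) := by
          field_simp
      _ ≤ (m / 0.99 * (|w i| / |x j - x i|)) * |t - x i| := by
          apply mul_le_mul_of_nonneg_left hti; positivity
  have hCb : |C| ≤ (0.403 * m / 0.99) * S := by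
    rw [hC, hS, Finset.mul_sum]
    refine (Finset.abs_sum_le_sum_abs _ _).trans (Finset.sum_le_sum ?_)
    intro i hi
    obtain ⟨hd, hti⟩ := hkey i hi
    rw [abs_div, abs_mul]
    rw [div_le_iff₀ (by linarith)]
    calc |w i| * |ψ i| ≤ |w i| * (0.403 * m) := by
          exact mul_le_mul_of_nonneg_left (hψ i) (abs_nonneg _)
      _ = (0.403 * m / 0.99 * (|w i| / |x j - x i|)) * (0.99 * |x j - x i|) := by
          field_simp
      _ ≤ (0.403 * m / 0.99 * (|w i| / |x j - x i|)) * |t - x i| := by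
          apply mul_le_mul_of_nonneg_left hti; positivity
  have hξS : |ξ| * S ≤ 0.01 := by rw [hξ]; exact ht2
  have hξ0 : 0 ≤ |ξ| := abs_nonneg _
  -- |ζ j - ζ k| ≥ m
  have hjksum : m ≤ |ζ j - ζ k| := by
    rcases lt_trichotomy (ζ k) 0 with h | h | h
    · have hj : 0 ≤ ζ j := by nlinarith
      have he : |ζ j - ζ k| = ζ j - ζ k := abs_of_nonneg (by linarith)
      rw [abs_of_neg h] at hk
      rw [he]; linarith
    · rw [h, abs_zero] at hk
      linarith [abs_nonneg (ζ j - ζ k)]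
    · have hj : ζ j ≤ 0 := by nlinarith
      have he : |ζ j - ζ k| = -(ζ j - ζ k) := abs_of_nonpos (by linarith)
      rw [abs_of_pos h] at hk
      rw [he]; linarith
  have htri : |ζ j - ζ k| - |φ - ψ j + ξ * (A * φ - A * ζ k + B - C)| ≤ |N| := by
    rw [hN]
    calc |ζ j - ζ k| - |φ - ψ j + ξ * (A * φ - A * ζ k + B - C)|
        = |ζ j - ζ k| - |-(φ - ψ j + ξ * (A * φ - A * ζ k + B - C))| := by
          rw [abs_neg]
      _ ≤ |ζ j - ζ k - -(φ - ψ j + ξ * (A * φ - A * ζ k + B - C))| :=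
          abs_sub_abs_le_abs_sub _ _
      _ = |ζ j - ζ k + φ - ψ j + ξ * (A * φ - A * ζ k + B - C)| := by ring_nf
  have hrest : |φ - ψ j + ξ * (A * φ - A * ζ k + B - C)|
      ≤ |φ| + |ψ j| + |ξ| * (|A| * |φ| + |A| * |ζ k| + |B| + |C|) := by
    have h1 : |φ - ψ j + ξ * (A * φ - A * ζ k + B - C)|
        ≤ |φ| + |ψ j| + |ξ| * |A * φ - A * ζ k + B - C| := by
      calc |φ - ψ j + ξ * (A * φ - A * ζ k + B - C)|
          ≤ |φ - ψ j| + |ξ * (A * φ - A * ζ k + B - C)| := abs_add_le _ _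
        _ ≤ |φ| + |ψ j| + |ξ| * |A * φ - A * ζ k + B - C| := by
            rw [abs_mul]
            have := abs_sub (φ) (ψ j)
            nlinarith [abs_sub_abs_le_abs_sub φ (ψ j), abs_add_le φ (-ψ j),
              abs_neg (ψ j)]
    have h2 : |A * φ - A * ζ k + B - C| ≤ |A| * |φ| + |A| * |ζ k| + |B| + |C| := by
      calc |A * φ - A * ζ k + B - C|
          ≤ |A * φ - A * ζ k + B| + |C| := by
            have := abs_add_le (A * φ - A * ζ k + B) (-C)
            rw [abs_neg] at this
            calc |A * φ - A * ζ k + B - C| = |(A * φ - A * ζ k + B) + -C| := by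
                  ring_nf
              _ ≤ _ := this
        _ ≤ |A * φ - A * ζ k| + |B| + |C| := by
            have := abs_add_le (A * φ - A * ζ k) B; linarith
        _ ≤ |A| * |φ| + |A| * |ζ k| + |B| + |C| := by
            have := abs_add_le (A * φ) (-(A * ζ k))
            rw [abs_neg, abs_mul, abs_mul] at this
            have h3 : A * φ - A * ζ k = A * φ + -(A * ζ k) := by ring
            rw [h3]; linarith
    nlinarith [abs_nonneg ξ]
  -- collect the products
  have p1 : |ξ| * |A| ≤ (1 / 0.99) * 0.01 := by
    calc |ξ| * |A| ≤ |ξ| * ((1 / 0.99) * S) := by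
          exact mul_le_mul_of_nonneg_left hAb hξ0
      _ = (1 / 0.99) * (|ξ| * S) := by ring
      _ ≤ (1 / 0.99) * 0.01 := by linarith
  have p2 : |ξ| * |B| ≤ (m / 0.99) * 0.01 := by
    calc |ξ| * |B| ≤ |ξ| * ((m / 0.99) * S) := mul_le_mul_of_nonneg_left hBb hξ0
      _ = (m / 0.99) * (|ξ| * S) := by ring
      _ ≤ (m / 0.99) * 0.01 := by
          apply mul_le_mul_of_nonneg_left hξS; positivity
  have p3 : |ξ| * |C| ≤ (0.403 * m / 0.99) * 0.01 := by
    calc |ξ| * |C| ≤ |ξ| * ((0.403 * m / 0.99) * S) :=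
          mul_le_mul_of_nonneg_left hCb hξ0
      _ = (0.403 * m / 0.99) * (|ξ| * S) := by ring
      _ ≤ (0.403 * m / 0.99) * 0.01 := by
          apply mul_le_mul_of_nonneg_left hξS; positivity
  have hζk : |ζ k| = m := hk
  have hA0 : 0 ≤ |A| := abs_nonneg _
  have q1 : |ξ| * (|A| * |φ| + |A| * |ζ k| + |B| + |C|)
      ≤ (1 / 0.99 * 0.01) * (0.403 * m) + (1 / 0.99 * 0.01) * m
        + m / 0.99 * 0.01 + 0.403 * m / 0.99 * 0.01 := by
    have e : |ξ| * (|A| * |φ| + |A| * |ζ k| + |B| + |C|)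
        = (|ξ| * |A|) * |φ| + (|ξ| * |A|) * |ζ k| + |ξ| * |B| + |ξ| * |C| := by
      ring
    rw [e]
    have t1 : (|ξ| * |A|) * |φ| ≤ (1 / 0.99 * 0.01) * (0.403 * m) :=
      mul_le_mul p1 hφ (abs_nonneg φ) (by norm_num)
    have t2 : (|ξ| * |A|) * |ζ k| ≤ (1 / 0.99 * 0.01) * m := by
      rw [hζk]; exact mul_le_mul_of_nonneg_right p1 hm0
    linarith
  have q2 : (1 / 0.99 * 0.01) * (0.403 * m) + (1 / 0.99 * 0.01) * m
      + m / 0.99 * 0.01 + 0.403 * m / 0.99 * 0.01 ≤ 0.029 * m := by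
    ring_nf
    linarith
  linarith [hψ j]
end

section
/- Let x_0 < x_1 < … < x_n be real nodes, let w_0, …, w_n be nonzero real weights, and let ζ_0, …, ζ_n, ψ_0, …, ψ_n be real numbers with ‖ζ‖_∞ := max_i |ζ_i| ≤ 0.001 and |ψ_i| ≤ 0.403·‖ζ‖_∞ for all i. Let j be an index and let x ∈ ℝ satisfy sup_{i ≠ j} |(x − x_j)/(x_i − x_j)| < 0.01 and 0 < |(x − x_j)/w_j|·S ≤ 0.01, where S := Σ_{i ≠ j} |w_i|/|x_j − x_i|. Define ξ := (x − x_j)/w_j, A := Σ_{i ≠ j} w_i/(x − x_i), B := Σ_{i ≠ j} w_i ζ_i/(x − x_i), C := Σ_{i ≠ j} w_i ψ_i/(x − x_i), and D := 1 − ζ_j + ψ_j + ξ(A − B + C). Then |D − 1| ≤ 0.012; in particular 0.988 ≤ D ≤ 1.012. -/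
/-- With nodes `x_0 < … < x_n`, nonzero weights `w`, perturbations `ζ, ψ` with
`‖ζ‖_∞ ≤ 0.001` and `|ψ_i| ≤ 0.403‖ζ‖_∞`, an index `j` and a point `t`
satisfying the localization hypotheses, the denominator
`D := 1 − ζ_j + ψ_j + ξ(A − B + C)` satisfies `|D − 1| ≤ 0.012`; in
particular `0.988 ≤ D ≤ 1.012`. -/
theorem denominator_close_to_one
    (n : ℕ) (x w : Fin (n + 1) → ℝ)
    (hx : StrictMono x) (hw : ∀ i, w i ≠ 0)
    (ζ ψ : Fin (n + 1) → ℝ)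
    (hζ : supNorm ζ ≤ 0.001)
    (hψ : ∀ i, |ψ i| ≤ 0.403 * supNorm ζ)
    (j : Fin (n + 1)) (t : ℝ)
    (ht3 : ∀ i, i ≠ j → |(t - x j) / (x i - x j)| < 0.01)
    (S : ℝ) (hS : S = ∑ i ∈ Finset.univ.erase j, |w i| / |x j - x i|)
    (ht1 : 0 < |(t - x j) / w j| * S) (ht2 : |(t - x j) / w j| * S ≤ 0.01)
    (ξ A B C D : ℝ)
    (hξ : ξ = (t - x j) / w j)
    (hA : A = ∑ i ∈ Finset.univ.erase j, w i / (t - x i))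
    (hB : B = ∑ i ∈ Finset.univ.erase j, w i * ζ i / (t - x i))
    (hC : C = ∑ i ∈ Finset.univ.erase j, w i * ψ i / (t - x i))
    (hD : D = 1 - ζ j + ψ j + ξ * (A - B + C)) :
    |D - 1| ≤ 0.012 ∧ 0.988 ≤ D ∧ D ≤ 1.012 := by
  have hsabs : ∀ i, |ζ i| ≤ supNorm ζ := fun i =>
    Finset.le_sup' (fun k => |ζ k|) (Finset.mem_univ i)
  set s := supNorm ζ with hs
  have hs0 : 0 ≤ s := le_trans (abs_nonneg _) (hsabs j)
  have key : ∀ i ∈ Finset.univ.erase j,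
      0.99 * |x j - x i| ≤ |t - x i| ∧ 0 < |x j - x i| := by
    intro i hi
    have hij : i ≠ j := Finset.ne_of_mem_erase hi
    have hne : x i - x j ≠ 0 := sub_ne_zero.mpr (fun h => hij (hx.injective h))
    have hpos : 0 < |x i - x j| := abs_pos.mpr hne
    have h3 := ht3 i hij
    rw [abs_div, div_lt_iff₀ hpos] at h3
    have htri : |x i - x j| - |t - x j| ≤ |x i - t| := by
      have := abs_sub_abs_le_abs_sub (x i - x j) (t - x j)
      simpa using this
    have hcomm : |x j - x i| = |x i - x j| := abs_sub_comm _ _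
    have hcomm2 : |t - x i| = |x i - t| := abs_sub_comm _ _
    constructor
    · rw [hcomm, hcomm2]; linarith
    · rw [hcomm]; exact hpos
  have hterm : ∀ i ∈ Finset.univ.erase j,
      |w i| / |t - x i| ≤ (1 / 0.99) * (|w i| / |x j - x i|) := by
    intro i hi
    obtain ⟨h1, h2⟩ := key i hi
    have ht0 : 0 < |t - x i| := lt_of_lt_of_le (by positivity) h1
    rw [div_le_iff₀ ht0]
    have hw0 : 0 ≤ |w i| := abs_nonneg _
    have h3 : |w i| / |x j - x i| * |x j - x i| = |w i| := div_mul_cancel₀ _ (ne_of_gt h2)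
    nlinarith [mul_le_mul_of_nonneg_left h1 (div_nonneg hw0 (le_of_lt h2))]
  have hS0 : 0 ≤ S := by
    rw [hS]; exact Finset.sum_nonneg fun i _ => div_nonneg (abs_nonneg _) (abs_nonneg _)
  have hAbd : |A| ≤ (1 / 0.99) * S := by
    rw [hA, hS, Finset.mul_sum]
    refine le_trans (Finset.abs_sum_le_sum_abs _ _) (Finset.sum_le_sum fun i hi => ?_)
    rw [abs_div]; exact hterm i hi
  have hBbd : |B| ≤ s * ((1 / 0.99) * S) := by
    rw [hB, hS, Finset.mul_sum, Finset.mul_sum]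
    refine le_trans (Finset.abs_sum_le_sum_abs _ _) (Finset.sum_le_sum fun i hi => ?_)
    have h1 : |w i * ζ i / (t - x i)| = |ζ i| * (|w i| / |t - x i|) := by
      rw [abs_div, abs_mul]; ring
    rw [h1]
    have h2 := hterm i hi
    have h3 := hsabs i
    have h4 : (0:ℝ) ≤ |w i| / |t - x i| := div_nonneg (abs_nonneg _) (abs_nonneg _)
    nlinarith [abs_nonneg (ζ i), mul_le_mul h3 h2 h4 hs0]
  have hCbd : |C| ≤ 0.403 * s * ((1 / 0.99) * S) := by
    rw [hC, hS, Finset.mul_sum, Finset.mul_sum]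
    refine le_trans (Finset.abs_sum_le_sum_abs _ _) (Finset.sum_le_sum fun i hi => ?_)
    have h1 : |w i * ψ i / (t - x i)| = |ψ i| * (|w i| / |t - x i|) := by
      rw [abs_div, abs_mul]; ring
    rw [h1]
    have h2 := hterm i hi
    have h3 := hψ i
    have h4 : (0:ℝ) ≤ |w i| / |t - x i| := div_nonneg (abs_nonneg _) (abs_nonneg _)
    nlinarith [abs_nonneg (ψ i), mul_le_mul h3 h2 h4 (by nlinarith : (0:ℝ) ≤ 0.403 * s)]
  have hξS : |ξ| * S ≤ 0.01 := by rw [hξ]; exact ht2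
  have hξ0 : 0 ≤ |ξ| := abs_nonneg _
  have hmain : |ξ * (A - B + C)| ≤ (0.01 / 0.99) * (1 + s + 0.403 * s) := by
    rw [abs_mul]
    have h1 : |A - B + C| ≤ |A| + |B| + |C| := by
      calc |A - B + C| ≤ |A - B| + |C| := abs_add_le _ _
        _ ≤ |A| + |B| + |C| := by linarith [abs_sub A B]
    have h2 : |ξ| * |A - B + C| ≤ |ξ| * (|A| + |B| + |C|) :=
      mul_le_mul_of_nonneg_left h1 hξ0
    nlinarith [mul_le_mul_of_nonneg_left hAbd hξ0, mul_le_mul_of_nonneg_left hBbd hξ0,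
      mul_le_mul_of_nonneg_left hCbd hξ0]
  have hζj : |ζ j| ≤ s := hsabs j
  have hψj := hψ j
  have hDm1 : |D - 1| ≤ 0.012 := by
    have h1 : D - 1 = -ζ j + ψ j + ξ * (A - B + C) := by rw [hD]; ring
    have h2 : |D - 1| ≤ |ζ j| + |ψ j| + |ξ * (A - B + C)| := by
      rw [h1]
      calc |-ζ j + ψ j + ξ * (A - B + C)| ≤ |-ζ j + ψ j| + |ξ * (A - B + C)| := abs_add_le _ _
        _ ≤ |ζ j| + |ψ j| + |ξ * (A - B + C)| := by
            have := abs_add_le (-ζ j) (ψ j); rw [abs_neg] at this; linarith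
    have hsle : s ≤ 0.001 := hζ
    linarith [abs_nonneg (ψ j)]
  refine ⟨hDm1, ?_, ?_⟩
  · have := abs_le.mp hDm1; linarith [this.1]
  · have := abs_le.mp hDm1; linarith [(abs_le.mp hDm1).2]
end
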